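/- arXiv:2107.11916 — 10 statements merged into one kernel-verified Lean document; each statement's English description precedes it below -/
import Mathlib

section
/- Let a_1, ..., a_t be positive integers and let A be the K-subalgebra of K[x] generated by the monomials x^{a_1}, x^{a_2}, ..., x^{a_t}. Then there exist α, β ∈ K with α ≠ β such that f(α) = f(β) for all f ∈ A if and only if gcd(a_1, a_2, ..., a_t) > 1. -/
open Polynomial

-- Bezout for finsets
lemma finset_gcd_bezout {ι : Type*} [DecidableEq ι] (s : Finset ι) (a : ι → ℕ) :
    ∃ z : ι → ℤ, ∑ i ∈ s, z i * a i = s.gcd a := by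
  induction s using Finset.induction with
  | empty => exact ⟨0, by simp⟩
  | @insert i s hi ih =>
    obtain ⟨z, hz⟩ := ih
    refine ⟨Function.update (fun j => Nat.gcdB (a i) (s.gcd a) * z j) i (Nat.gcdA (a i) (s.gcd a)), ?_⟩
    rw [Finset.gcd_insert, Finset.sum_insert hi, Function.update_self]
    have : ∑ j ∈ s, (Function.update (fun j => Nat.gcdB (a i) (s.gcd a) * z j) i (Nat.gcdA (a i) (s.gcd a))) j * a j
        = Nat.gcdB (a i) (s.gcd a) * ∑ j ∈ s, z j * a j := by
      rw [Finset.mul_sum]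
      refine Finset.sum_congr rfl fun j hj => ?_
      rw [Function.update_of_ne (by rintro rfl; exact hi hj), mul_assoc]
    rw [this, hz]
    have := Nat.gcd_eq_gcd_ab (a i) (s.gcd a)
    push_cast [GCDMonoid.gcd] at *
    linarith [this]

theorem monomial_subalgebra_common_value_iff_gcd_gt_one
    {K : Type*} [Field K] [IsAlgClosed K] [CharZero K]
    (t : ℕ) (ht : 0 < t) (a : Fin t → ℕ) (hapos : ∀ i, 0 < a i)
    (A : Subalgebra K (Polynomial K))
    (hA : A = Algebra.adjoin K (Set.range fun i => (Polynomial.X : Polynomial K) ^ a i)) :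
    (∃ α β : K, α ≠ β ∧ ∀ f ∈ A, f.eval α = f.eval β) ↔ 1 < Finset.univ.gcd a := by
  subst hA
  set i0 : Fin t := ⟨0, ht⟩
  have hg0 : Finset.univ.gcd a ≠ 0 := by
    intro h
    exact (hapos i0).ne' (Finset.gcd_eq_zero_iff.mp h i0 (Finset.mem_univ _))
  have pow_mem : ∀ c : Fin t → ℕ,
      (X : K[X]) ^ (∑ i, c i * a i) ∈
        Algebra.adjoin K (Set.range fun i => (Polynomial.X : Polynomial K) ^ a i) := by
    intro c
    have : (X : K[X]) ^ (∑ i, c i * a i) = ∏ i, ((X : K[X]) ^ a i) ^ c i := by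
      rw [← Finset.prod_pow_eq_pow_sum]
      exact Finset.prod_congr rfl fun i _ => by rw [← pow_mul, mul_comm]
    rw [this]
    exact Subalgebra.prod_mem _ fun i _ =>
      Subalgebra.pow_mem _ (Algebra.subset_adjoin (Set.mem_range_self i)) _
  constructor
  · rintro ⟨α, β, hne, h⟩
    by_contra hle
    have hg1 : Finset.univ.gcd a = 1 := by omega
    obtain ⟨z, hz⟩ := finset_gcd_bezout Finset.univ a
    rw [hg1, Nat.cast_one] at hz
    have hkey : ∑ i, ((z i).toNat + 1) * a i = (∑ i, ((-z i).toNat + 1) * a i) + 1 := by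
      have : ((∑ i, ((z i).toNat + 1) * a i : ℕ) : ℤ)
          = ((∑ i, ((-z i).toNat + 1) * a i : ℕ) : ℤ) + 1 := by
        push_cast
        rw [← hz, ← Finset.sum_add_distrib]
        refine Finset.sum_congr rfl fun i _ => ?_
        have hti : ((z i).toNat : ℤ) - ((-z i).toNat : ℤ) = z i := by omega
        nlinarith [hti]
      exact_mod_cast this
    set n : ℕ := ∑ i, ((-z i).toNat + 1) * a i with hn
    have hn1 : 1 ≤ n := by
      calc 1 ≤ ((-z i0).toNat + 1) * a i0 :=
            Nat.mul_pos (by omega) (hapos i0)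
        _ ≤ n := Finset.single_le_sum (f := fun i => ((-z i).toNat + 1) * a i)
            (fun i _ => Nat.zero_le _) (Finset.mem_univ i0)
    have h1 : α ^ n = β ^ n := by
      have := h _ (pow_mem (fun i => (-z i).toNat + 1))
      simpa using this
    have h2 : α ^ (n + 1) = β ^ (n + 1) := by
      have := h _ (pow_mem (fun i => (z i).toNat + 1))
      rw [hkey] at this
      simpa using this
    apply hne
    rcases eq_or_ne α 0 with rfl | hα
    · have hb : β ^ n = 0 := by rw [← h1]; exact zero_pow (by omega)
      exact ((pow_eq_zero_iff (by omega)).mp hb).symm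
    · have hαn : α ^ n ≠ 0 := pow_ne_zero _ hα
      have : α ^ n * α = α ^ n * β := by
        rw [← pow_succ, h1, ← pow_succ, h2]
      exact mul_left_cancel₀ hαn this
  · intro hgcd
    set m := Finset.univ.gcd a with hm
    haveI : NeZero ((m : ℕ) : K) := ⟨Nat.cast_ne_zero.mpr hg0⟩
    obtain ⟨ζ, hζ⟩ := HasEnoughRootsOfUnity.exists_primitiveRoot K m
    refine ⟨1, ζ, (hζ.ne_one hgcd).symm, ?_⟩
    intro f hf
    have hle : Algebra.adjoin K (Set.range fun i => (Polynomial.X : Polynomial K) ^ a i) ≤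
        AlgHom.equalizer (aeval (1 : K)) (aeval ζ) := by
      rw [Algebra.adjoin_le_iff]
      rintro _ ⟨i, rfl⟩
      show aeval (1 : K) ((X : K[X]) ^ a i) = aeval ζ ((X : K[X]) ^ a i)
      rw [map_pow, map_pow, aeval_X, aeval_X, one_pow]
      exact (hζ.pow_eq_one_iff_dvd _).mpr (Finset.gcd_dvd (Finset.mem_univ i)) |>.symm
    have := hle hf
    rw [AlgHom.mem_equalizer] at this
    simpa [coe_aeval_eq_eval] using this
end

section
/- Let A be a K-subalgebra of K[x] of codimension one, i.e. the quotient K[x]/A has dimension 1 as a K-vector space. Then either there exists γ ∈ K such that A = {f ∈ K[x] : f'(γ) = 0}, or there exist α, β ∈ K with α ≠ β such that A = {f ∈ K[x] : f(α) = f(β)}. -/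
open Polynomial

/-!
Choose a linear functional `μ` with kernel `A` and `μ X = 1`. Since `f - μ f • X ∈ A` for every `f`,
closure of `A` under products expresses `μ (f * g)` through `μ f`, `μ g`, `μ (X * f)`, `μ (X * g)`
and `μ (X ^ 2)`; consequently `μ` vanishes on the ideal generated by the quadratic
`q = X ^ 2 - μ (X ^ 2) X + μ (X ^ 2) ^ 2 - μ (X ^ 3)`. A functional vanishing on `(q)` is
determined by its values at `1` and `X`. Factoring `q = (X - α) (X - β)`, this identifies `μ` with
`f ↦ f'(α)` when `α = β` and with `f ↦ (f(α) - f(β)) / (α - β)` otherwise.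
-/

theorem Submodule.exists_linearMap_mem_iff_and_apply_eq_one {K V : Type*} [Field K]
    [AddCommGroup V] [Module K V] {p : Submodule K V} (hp : Module.finrank K (V ⧸ p) = 1)
    {v : V} (hv : v ∉ p) :
    ∃ μ : V →ₗ[K] K, (∀ w, w ∈ p ↔ μ w = 0) ∧ μ v = 1 := by
  obtain ⟨e⟩ : Nonempty ((V ⧸ p) ≃ₗ[K] K) :=
    have : Module.Finite K (V ⧸ p) := Module.finite_of_finrank_eq_succ hp
    FiniteDimensional.nonempty_linearEquiv_of_finrank_eq (by rw [hp, Module.finrank_self])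
  have hmem (w : V) : w ∈ p ↔ e (p.mkQ w) = 0 := by
    rw [LinearEquiv.map_eq_zero_iff, Submodule.mkQ_apply, Submodule.Quotient.mk_eq_zero]
  have hv' : e (p.mkQ v) ≠ 0 := (hmem v).not.mp hv
  refine ⟨(e (p.mkQ v))⁻¹ • (e.toLinearMap ∘ₗ p.mkQ), fun w => ?_, inv_mul_cancel₀ hv'⟩
  rw [hmem w, LinearMap.smul_apply, smul_eq_mul, mul_eq_zero, or_iff_right (inv_ne_zero hv')]
  rfl

theorem Polynomial.X_notMem_of_ne_top {R : Type*} [CommRing R] {A : Subalgebra R R[X]}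
    (hA : A ≠ ⊤) : X ∉ A := by
  contrapose! hA
  rw [eq_top_iff, ← adjoin_X, Algebra.adjoin_le_iff, Set.singleton_subset_iff]
  exact hA

theorem Subalgebra.ne_top_of_finrank_quotient_ne_zero {K R : Type*} [Field K] [Ring R]
    [Algebra K R] {A : Subalgebra K R}
    (hA : Module.finrank K (R ⧸ Subalgebra.toSubmodule A) ≠ 0) : A ≠ ⊤ := by
  intro htop
  rw [← Algebra.toSubmodule_eq_top] at htop
  rw [htop, Module.finrank_zero_of_subsingleton] at hA
  exact hA rfl

theorem IsAlgClosed.exists_add_eq_and_mul_eq {K : Type*} [Field K] [IsAlgClosed K] (s p : K) :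
    ∃ α β : K, α + β = s ∧ α * β = p := by
  obtain ⟨α, hα⟩ := IsAlgClosed.exists_root (C 1 * X ^ 2 + C (-s) * X + C p)
    (by rw [degree_quadratic one_ne_zero]; decide)
  refine ⟨α, s - α, by ring, ?_⟩
  simp only [IsRoot, eval_add, eval_mul, eval_C, eval_pow, eval_X] at hα
  linear_combination -hα

section
variable {K R : Type*} [Field K] [CommRing R] [Algebra K R] {A : Subalgebra K R}
  {μ : R →ₗ[K] K} (hμ : ∀ f, f ∈ A ↔ μ f = 0) {x : R} (hx : μ x = 1)
include hμ hx

theorem Subalgebra.apply_mul_eq_of_mem_iff (f g : R) :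
    μ (f * g) = μ g * μ (x * f) + μ f * μ (x * g) - μ f * μ g * μ (x ^ 2) := by
  have hf : f - μ f • x ∈ A := (hμ _).mpr (by simp [hx])
  have hg : g - μ g • x ∈ A := (hμ _).mpr (by simp [hx])
  have := (hμ _).mp (A.mul_mem hf hg)
  simp only [sub_mul, mul_sub, smul_mul_assoc, mul_smul_comm, map_sub, map_smul, smul_eq_mul,
    mul_comm f x, pow_two] at this ⊢
  linear_combination this

theorem Subalgebra.apply_mul_sub_mul_sub_eq_zero_of_mem_iff {a b : K} (hadd : a + b = μ (x ^ 2))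
    (hmul : a * b = μ (x ^ 2) ^ 2 - μ (x ^ 3)) (g : R) :
    μ ((x - algebraMap K R a) * (x - algebraMap K R b) * g) = 0 := by
  have hf := Subalgebra.apply_mul_eq_of_mem_iff hμ hx (x ^ 2 - μ (x ^ 2) • x) g
  have hexpand : (x - algebraMap K R a) * (x - algebraMap K R b) * g =
      (x ^ 2 - μ (x ^ 2) • x) * g + (a * b) • g := by
    simp only [Algebra.smul_def, map_mul, ← hadd, map_add]
    ring
  rw [mul_sub, mul_smul_comm, ← pow_succ', ← pow_two] at hf
  simp only [map_sub, map_smul, smul_eq_mul, hx] at hf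
  rw [hexpand, map_add, hf, map_smul, smul_eq_mul, hmul]
  ring

end

namespace Polynomial

variable {R M : Type*} [CommRing R] [Nontrivial R] [AddCommGroup M] [Module R M]

theorem linearMap_ext_of_apply_mul_eq_zero {q : R[X]} (hq : q.Monic) (hdeg : q.natDegree ≤ 2)
    {μ ν : R[X] →ₗ[R] M} (hμ : ∀ g, μ (q * g) = 0) (hν : ∀ g, ν (q * g) = 0)
    (h1 : μ 1 = ν 1) (hX : μ X = ν X) : μ = ν := by
  refine LinearMap.ext fun f => ?_
  have hrem : (f %ₘ q).degree ≤ 1 :=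
    Order.le_of_lt_succ <| (degree_modByMonic_lt f hq).trans_le (degree_le_of_natDegree_le hdeg)
  rw [← modByMonic_add_div f q, map_add, map_add, hμ, hν, eq_X_add_C_of_degree_le_one hrem]
  rw [← mul_one (C ((f %ₘ q).coeff 0))]
  simp only [C_mul', map_add, map_smul, hX, h1]

theorem eq_leval_comp_derivative {μ : R[X] →ₗ[R] R} (α : R)
    (hμ : ∀ g, μ ((X - C α) * (X - C α) * g) = 0) (h1 : μ 1 = 0) (hX : μ X = 1) :
    μ = leval α ∘ₗ derivative :=
  linearMap_ext_of_apply_mul_eq_zero ((monic_X_sub_C α).mul (monic_X_sub_C α))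
    (natDegree_mul_le.trans (by simp)) hμ (fun g => by simp [derivative_mul])
    (by simp [h1]) (by simp [hX])

theorem smul_eq_leval_sub_leval {μ : R[X] →ₗ[R] R} {α β : R}
    (hμ : ∀ g, μ ((X - C α) * (X - C β) * g) = 0) (h1 : μ 1 = 0) (hX : μ X = 1) :
    (α - β) • μ = leval α - leval β :=
  linearMap_ext_of_apply_mul_eq_zero ((monic_X_sub_C α).mul (monic_X_sub_C β))
    (natDegree_mul_le.trans (by simp)) (fun g => by simp [hμ]) (fun g => by simp)
    (by simp [h1]) (by simp [hX])

end Polynomial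

theorem codim_one_subalgebra_description_general
    {K : Type*} [Field K] [IsAlgClosed K]
    (A : Subalgebra K (Polynomial K))
    (hcodim : Module.finrank K (Polynomial K ⧸ Subalgebra.toSubmodule A) = 1) :
    (∃ γ : K, ∀ f : Polynomial K, f ∈ A ↔ (Polynomial.derivative f).eval γ = 0) ∨
    (∃ α β : K, α ≠ β ∧ ∀ f : Polynomial K, f ∈ A ↔ f.eval α = f.eval β) := by
  obtain ⟨μ, hμ, hμX⟩ := Submodule.exists_linearMap_mem_iff_and_apply_eq_one hcodim
    (X_notMem_of_ne_top (Subalgebra.ne_top_of_finrank_quotient_ne_zero (hcodim ▸ one_ne_zero)))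
  have hμ1 : μ 1 = 0 := (hμ 1).mp A.one_mem
  obtain ⟨α, β, hadd, hmul⟩ :=
    IsAlgClosed.exists_add_eq_and_mul_eq (μ (X ^ 2)) (μ (X ^ 2) ^ 2 - μ (X ^ 3))
  have hq (g : K[X]) : μ ((X - C α) * (X - C β) * g) = 0 :=
    Subalgebra.apply_mul_sub_mul_sub_eq_zero_of_mem_iff hμ hμX hadd hmul g
  rcases eq_or_ne α β with rfl | hne
  · refine Or.inl ⟨α, fun f => ?_⟩
    rw [← Subalgebra.mem_toSubmodule, hμ, eq_leval_comp_derivative α hq hμ1 hμX]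
    rfl
  · refine Or.inr ⟨α, β, hne, fun f => ?_⟩
    rw [← Subalgebra.mem_toSubmodule, hμ, ← smul_eq_zero_iff_right (sub_ne_zero.mpr hne),
      ← LinearMap.smul_apply, smul_eq_leval_sub_leval hq hμ1 hμX, LinearMap.sub_apply, sub_eq_zero]
    rfl

theorem codim_one_subalgebra_description
    {K : Type*} [Field K] [IsAlgClosed K] [CharZero K]
    (A : Subalgebra K (Polynomial K))
    (hcodim : Module.finrank K (Polynomial K ⧸ Subalgebra.toSubmodule A) = 1) :
    (∃ γ : K, ∀ f : Polynomial K, f ∈ A ↔ (Polynomial.derivative f).eval γ = 0) ∨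
    (∃ α β : K, α ≠ β ∧ ∀ f : Polynomial K, f ∈ A ↔ f.eval α = f.eval β) :=
  codim_one_subalgebra_description_general A hcodim
end

section
/- Every proper K-subalgebra A of K[x] of finite codimension has nonempty spectrum: there exists α ∈ K such that either f'(α) = 0 for all f ∈ A, or there exists β ≠ α with f(α) = f(β) for all f ∈ A. -/
open Polynomial

/-- The spectrum of a subalgebra `A` of `K[x]`. -/
def subalgebraSpectrum {K : Type*} [Field K] (A : Subalgebra K (Polynomial K)) : Set K :=
  {α | (∀ f ∈ A, (Polynomial.derivative f).eval α = 0) ∨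
    ∃ β : K, β ≠ α ∧ ∀ f ∈ A, f.eval α = f.eval β}


private lemma exists_dep {K V : Type*} [Field K] [AddCommGroup V] [Module K V]
    [Module.Finite K V] (v : Fin (Module.finrank K V + 1) → V) :
    ∃ c : Fin (Module.finrank K V + 1) → K, (∑ i, c i • v i) = 0 ∧ ∃ i, c i ≠ 0 := by
  have h : ¬ LinearIndependent K v := by
    intro h
    have := h.fintype_card_le_finrank
    simp [Fintype.card_fin] at this
  rwa [Fintype.not_linearIndependent_iff] at h

private lemma dvd_pow_of_roots {K : Type*} [Field K] [IsAlgClosed K] :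
    ∀ (n : ℕ) (v s : K[X]), v ≠ 0 → v.natDegree ≤ n →
      (∀ β : K, v.IsRoot β → s.IsRoot β) → v ∣ s ^ n := by
  intro n
  induction n with
  | zero =>
    intro v s hv hd _
    have hdeg : v.natDegree = 0 := Nat.le_zero.mp hd
    have hc : v = C (v.coeff 0) := eq_C_of_natDegree_le_zero (le_of_eq hdeg)
    have hc0 : v.coeff 0 ≠ 0 := fun h0 => hv (by rw [hc, h0, C_0])
    have : IsUnit v := hc ▸ isUnit_C.mpr hc0.isUnit
    exact this.dvd
  | succ n ih =>
    intro v s hv hd hroots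
    by_cases hdeg : v.natDegree = 0
    · have hc : v = C (v.coeff 0) := eq_C_of_natDegree_le_zero (le_of_eq hdeg)
      have hc0 : v.coeff 0 ≠ 0 := fun h0 => hv (by rw [hc, h0, C_0])
      have : IsUnit v := hc ▸ isUnit_C.mpr hc0.isUnit
      exact this.dvd
    · have hdeg' : v.degree ≠ 0 := fun h0 =>
        hdeg (natDegree_eq_zero_iff_degree_le_zero.mpr (le_of_eq h0))
      obtain ⟨β, hβ⟩ := IsAlgClosed.exists_root v hdeg'
      obtain ⟨v1, hv1⟩ := dvd_iff_isRoot.mpr hβ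
      have hsd : (X - C β) ∣ s := dvd_iff_isRoot.mpr (hroots β hβ)
      have hv1ne : v1 ≠ 0 := by rintro rfl; rw [mul_zero] at hv1; exact hv hv1
      have hXne : (X - C β : K[X]) ≠ 0 := X_sub_C_ne_zero β
      have hdeg1 : v1.natDegree ≤ n := by
        have h2 : v.natDegree = 1 + v1.natDegree := by
          rw [hv1, natDegree_mul hXne hv1ne, natDegree_X_sub_C]
        omega
      have hroots1 : ∀ γ : K, v1.IsRoot γ → s.IsRoot γ := by
        intro γ hγ
        apply hroots γ
        rw [hv1]; unfold IsRoot at hγ ⊢; rw [eval_mul, hγ, mul_zero]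
      rw [pow_succ']
      rw [hv1]
      exact mul_dvd_mul hsd (ih v1 s hv1ne hdeg1 hroots1)

private lemma C_mem {K : Type*} [Field K] (A : Subalgebra K (Polynomial K)) (c : K) :
    C c ∈ A := by
  rw [← Polynomial.algebraMap_eq]; exact A.algebraMap_mem c

private lemma exists_conductor {K : Type*} [Field K]
    (A : Subalgebra K (Polynomial K))
    (hfin : FiniteDimensional K (Polynomial K ⧸ Subalgebra.toSubmodule A)) :
    ∃ Q : Polynomial K, Q ≠ 0 ∧ ∀ p : Polynomial K, Q * p ∈ A := by
  classical
  set M := Subalgebra.toSubmodule A with hM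
  set n := Module.finrank K (Polynomial K ⧸ M) with hn
  -- step (a) : a nonconstant element of A
  obtain ⟨c, hc0, i0, hi0⟩ := exists_dep (fun i : Fin (n+1) => M.mkQ (X ^ ((i:ℕ)+1)))
  set f0 : K[X] := ∑ i : Fin (n+1), c i • X ^ ((i:ℕ)+1) with hf0
  have hf0A : f0 ∈ A := by
    have h1 : M.mkQ f0 = 0 := by
      rw [hf0, map_sum]
      simpa using hc0
    rwa [Submodule.mkQ_apply, Submodule.Quotient.mk_eq_zero] at h1
  have hf0coeff : f0.coeff ((i0:ℕ)+1) = c i0 := by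
    rw [hf0, finset_sum_coeff]
    rw [Finset.sum_eq_single i0]
    · simp [coeff_smul, coeff_X_pow]
    · intro b _ hb
      have : (b:ℕ) + 1 ≠ (i0:ℕ) + 1 := by
        intro h; exact hb (Fin.ext (by omega))
      simp [coeff_smul, coeff_X_pow, this]
      intro hx
      exact absurd (Fin.ext hx).symm hb
    · intro h; exact absurd (Finset.mem_univ i0) h
  have hf0ne : f0 ≠ 0 := by
    intro h; rw [h, coeff_zero] at hf0coeff; exact hi0 hf0coeff.symm
  have hf0d : 1 ≤ f0.natDegree := by
    by_contra hlt
    push_neg at hlt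
    have h1 : f0 = C (f0.coeff 0) := eq_C_of_natDegree_le_zero (by omega)
    have h2 : f0.coeff 0 = 0 := by
      rw [hf0, finset_sum_coeff]
      simp [coeff_smul, coeff_X_pow]
    rw [h2, C_0] at h1
    exact hf0ne h1
  -- monicize
  set f : K[X] := f0 * C (f0.leadingCoeff)⁻¹ with hf
  have hfA : f ∈ A := A.mul_mem hf0A (C_mem A _)
  have hfm : f.Monic := monic_mul_leadingCoeff_inv hf0ne
  have hfd : 1 ≤ f.natDegree := by
    rw [hf, natDegree_mul_C (inv_ne_zero (leadingCoeff_ne_zero.mpr hf0ne))]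
    exact hf0d
  set d := f.natDegree with hd
  -- step (b)
  have step_b : ∀ g : K[X], ∃ P : K[X], P ≠ 0 ∧ P ∈ A ∧ P * g ∈ A := by
    intro g
    obtain ⟨c, hc0, i0, hi0⟩ := exists_dep (fun i : Fin (n+1) => M.mkQ (f ^ (i:ℕ) * g))
    set q : K[X] := ∑ i : Fin (n+1), c i • X ^ (i:ℕ) with hq
    have hqne : q ≠ 0 := by
      have hco : q.coeff (i0:ℕ) = c i0 := by
        rw [hq, finset_sum_coeff]
        rw [Finset.sum_eq_single i0]
        · simp [coeff_smul, coeff_X_pow]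
        · intro b _ hb
          have : (b:ℕ) ≠ (i0:ℕ) := fun h => hb (Fin.ext h)
          simp [coeff_smul, coeff_X_pow, this]
          intro hx
          exact absurd (Fin.ext hx).symm hb
        · intro h; exact absurd (Finset.mem_univ i0) h
      intro h; rw [h, coeff_zero] at hco; exact hi0 hco.symm
    have hcomp : aeval f q = q.comp f := by
      rw [aeval_def, Polynomial.algebraMap_eq]; rfl
    refine ⟨aeval f q, ?_, ?_, ?_⟩
    · rw [hcomp]
      intro hz
      rcases comp_eq_zero_iff.mp hz with h1 | h2
      · exact hqne h1
      · have : f.natDegree = 0 := by rw [h2.2]; exact natDegree_C _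
        omega
    · have h1 : aeval f q ∈ Algebra.adjoin K {f} := by
        rw [Algebra.adjoin_singleton_eq_range_aeval]
        exact Set.mem_range_self q
      exact Algebra.adjoin_le (by simpa using hfA) h1
    · have hmem : (∑ i : Fin (n+1), c i • (f ^ (i:ℕ) * g)) ∈ A := by
        have h1 : M.mkQ (∑ i : Fin (n+1), c i • (f ^ (i:ℕ) * g)) = 0 := by
          rw [map_sum]; simpa using hc0
        rwa [Submodule.mkQ_apply, Submodule.Quotient.mk_eq_zero] at h1
      have heq : aeval f q * g = ∑ i : Fin (n+1), c i • (f ^ (i:ℕ) * g) := by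
        rw [hq, map_sum, Finset.sum_mul]
        congr 1; ext i
        rw [map_smul, map_pow, aeval_X, smul_mul_assoc]
      rw [heq]; exact hmem
  -- the conductor element
  choose P hPne hPA hPX using fun j : ℕ => step_b (X ^ j)
  set Q : K[X] := ∏ j ∈ Finset.range d, P j with hQdef
  have hQne : Q ≠ 0 := Finset.prod_ne_zero_iff.mpr fun j _ => hPne j
  refine ⟨Q, hQne, ?_⟩
  set S : Submodule K (Polynomial K) := M.comap (LinearMap.mulLeft K Q) with hS
  have hSmem : ∀ p : K[X], p ∈ S ↔ Q * p ∈ A := by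
    intro p; rw [hS, Submodule.mem_comap, LinearMap.mulLeft_apply]; rfl
  have hbase : ∀ j, j < d → (X:K[X]) ^ j ∈ S := by
    intro j hj
    rw [hSmem]
    rw [hQdef, ← Finset.prod_erase_mul (Finset.range d) P (Finset.mem_range.mpr hj),
      mul_assoc]
    exact A.mul_mem (Subalgebra.prod_mem A fun k _ => hPA k) (hPX j)
  have hspan : ∀ (N : ℕ) (p : K[X]), p.natDegree < N →
      (∀ k, k < N → (X:K[X]) ^ k ∈ S) → p ∈ S := by
    intro N p hp hX
    rw [p.as_sum_range' N hp]
    apply Submodule.sum_mem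
    intro k hk
    rw [← smul_X_eq_monomial]
    exact S.smul_mem _ (hX k (Finset.mem_range.mp hk))
  have hmono : ∀ m : ℕ, (X:K[X]) ^ m ∈ S := by
    intro m
    induction m using Nat.strong_induction_on with
    | _ m ih =>
      by_cases hm : m < d
      · exact hbase m hm
      · push_neg at hm
        set r : K[X] := f - X ^ d with hr
        have hdr : r.degree < (d : WithBot ℕ) := by
          have h3 : f.degree = (d : WithBot ℕ) := by
            rw [hd]; exact degree_eq_natDegree hfm.ne_zero
          have h1 : f.degree = (X ^ d : K[X]).degree := by
            rw [degree_X_pow, h3]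
          have h2 := degree_sub_lt h1 hfm.ne_zero
            (by rw [leadingCoeff_X_pow]; exact hfm.leadingCoeff)
          rw [← hr] at h2
          rwa [h3] at h2
        have key : (X:K[X]) ^ m = X ^ (m - d) * f - X ^ (m - d) * r := by
          have h1 : (X:K[X]) ^ (m-d) * f - X ^ (m-d) * r = X ^ (m-d) * X ^ d := by
            rw [hr]; ring
          rw [h1, ← pow_add]
          congr 1; omega
        rw [key]
        apply Submodule.sub_mem
        · rw [hSmem]
          have h2 : Q * (X ^ (m - d) * f) = f * (Q * X ^ (m-d)) := by ring
          rw [h2]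
          exact A.mul_mem hfA ((hSmem _).mp (ih (m-d) (by omega)))
        · by_cases hr0 : r = 0
          · rw [hr0, mul_zero]; exact S.zero_mem
          · apply hspan m _ ?_ (fun k hk => ih k hk)
            have hrd : r.natDegree < d := (natDegree_lt_iff_degree_lt hr0).mpr hdr
            have hXd : ((X:K[X]) ^ (m-d)) ≠ 0 := pow_ne_zero _ X_ne_zero
            rw [natDegree_mul hXd hr0, natDegree_X_pow]
            omega
  intro p
  exact (hSmem p).mp (hspan (p.natDegree + 1) p (Nat.lt_succ_self _)
    (fun k _ => hmono k))

theorem spectrum_nonempty_of_proper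
    {K : Type*} [Field K] [IsAlgClosed K] [CharZero K]
    (A : Subalgebra K (Polynomial K)) (hproper : A ≠ ⊤)
    (hfin : FiniteDimensional K (Polynomial K ⧸ Subalgebra.toSubmodule A)) :
    (subalgebraSpectrum A).Nonempty := by
  classical
  by_contra hne
  rw [Set.not_nonempty_iff_eq_empty] at hne
  have hα : ∀ α : K, (∃ f ∈ A, (derivative f).eval α ≠ 0) ∧
      ∀ β : K, β ≠ α → ∃ f ∈ A, f.eval α ≠ f.eval β := by
    intro α
    have h1 := Set.eq_empty_iff_forall_notMem.mp hne α
    simp only [subalgebraSpectrum, Set.mem_setOf_eq] at h1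
    push_neg at h1
    exact h1
  obtain ⟨Q, hQ0, hQ⟩ := exists_conductor A hfin
  -- the conductor ideal
  set J : Ideal (Polynomial K) :=
    { carrier := {p | ∀ g : Polynomial K, p * g ∈ A}
      add_mem' := fun {p} {q} hp hq g => by
        rw [add_mul]; exact A.add_mem (hp g) (hq g)
      zero_mem' := fun g => by rw [zero_mul]; exact A.zero_mem
      smul_mem' := fun c {p} hp g => by
        have : (c • p) * g = p * (c * g) := by
          rw [smul_eq_mul]; ring
        rw [this]; exact hp (c * g) } with hJdef
  have hQJ : Q ∈ J := hQ
  obtain ⟨h, hh⟩ : ∃ h, J = Ideal.span {h} := (IsPrincipalIdealRing.principal J).principal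
  have hh0 : h ≠ 0 := by
    rintro rfl
    rw [hh] at hQJ
    simp only [Ideal.span_singleton_eq_bot.mpr rfl, Ideal.mem_bot] at hQJ
    exact hQ0 hQJ
  have hhJ : h ∈ J := hh ▸ Ideal.mem_span_singleton_self h
  have hmulA : ∀ g : Polynomial K, h * g ∈ A := hhJ
  have hdeg : h.natDegree ≠ 0 := by
    intro hd0
    have hc : h = C (h.coeff 0) := eq_C_of_natDegree_le_zero (le_of_eq hd0)
    have hc0 : h.coeff 0 ≠ 0 := fun h0 => hh0 (by rw [hc, h0, C_0])
    apply hproper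
    rw [Algebra.eq_top_iff]
    intro g
    have h2 : h * (C (h.coeff 0)⁻¹ * g) = g := by
      nth_rewrite 1 [hc]
      rw [← mul_assoc, ← C_mul, mul_inv_cancel₀ hc0, C_1, one_mul]
    have h3 := hmulA (C (h.coeff 0)⁻¹ * g)
    rwa [h2] at h3
  obtain ⟨α, hroot⟩ := IsAlgClosed.exists_root h
    (fun h0 => hdeg (natDegree_eq_zero_iff_degree_le_zero.mpr (le_of_eq h0)))
  set m := rootMultiplicity α h with hmdef
  have hm : 0 < m := (rootMultiplicity_pos hh0).mpr hroot
  set v : Polynomial K := h /ₘ (X - C α) ^ m with hvdef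
  have hfact : (X - C α) ^ m * v = h := pow_mul_divByMonic_rootMultiplicity_eq h α
  have hvα : v.eval α ≠ 0 := eval_divByMonic_pow_rootMultiplicity_ne_zero α hh0
  have hv0 : v ≠ 0 := fun h0 => hvα (by rw [h0, eval_zero])
  obtain ⟨g, hgA, hg'⟩ := (hα α).1
  have hsep := (hα α).2
  have hsep' : ∀ β : K, ∃ f, f ∈ A ∧ (β ≠ α → f.eval α ≠ f.eval β) := by
    intro β
    by_cases hβ : β = α
    · exact ⟨1, A.one_mem, fun hc => absurd hβ hc⟩
    · obtain ⟨f, hfA, hfne⟩ := hsep β hβ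
      exact ⟨f, hfA, fun _ => hfne⟩
  choose F hFA hFval using hsep'
  have hβα : ∀ β ∈ v.roots.toFinset, β ≠ α := by
    intro β hβ
    have : v.IsRoot β := (mem_roots hv0).mp (Multiset.mem_toFinset.mp hβ)
    intro hc; rw [hc] at this; exact hvα this
  set s : Polynomial K := ∏ β ∈ v.roots.toFinset, (F β - C ((F β).eval β)) with hsdef
  have hsA : s ∈ A := Subalgebra.prod_mem A fun β _ => A.sub_mem (hFA β) (C_mem A _)
  have hsα : s.eval α ≠ 0 := by
    rw [hsdef, eval_prod]
    apply Finset.prod_ne_zero_iff.mpr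
    intro β hβ
    rw [eval_sub, eval_C]
    exact sub_ne_zero_of_ne (hFval β (hβα β hβ))
  have hsroots : ∀ β : K, v.IsRoot β → s.IsRoot β := by
    intro β hβ
    have hβm : β ∈ v.roots.toFinset :=
      Multiset.mem_toFinset.mpr ((mem_roots hv0).mpr hβ)
    unfold IsRoot
    rw [hsdef, eval_prod]
    apply Finset.prod_eq_zero hβm
    rw [eval_sub, eval_C, sub_self]
  set e : Polynomial K := s ^ v.natDegree with hedef
  have heA : e ∈ A := pow_mem hsA v.natDegree
  obtain ⟨e1, he1⟩ : v ∣ e := dvd_pow_of_roots v.natDegree v s hv0 le_rfl hsroots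
  have heα : e.eval α ≠ 0 := by
    rw [hedef, eval_pow]; exact pow_ne_zero _ hsα
  have he1α : e1.eval α ≠ 0 := by
    intro h0; apply heα; rw [he1, eval_mul, h0, mul_zero]
  obtain ⟨g1, hg1⟩ : (X - C α) ∣ (g - C (g.eval α)) := X_sub_C_dvd_sub_C_eval
  have hg1α : g1.eval α = (derivative g).eval α := by
    have hder := congrArg derivative hg1
    rw [derivative_sub, derivative_C, sub_zero, derivative_mul, derivative_sub,
      derivative_X, derivative_C, sub_zero, one_mul] at hder
    have hev := congrArg (eval α) hder
    rw [eval_add, eval_mul, eval_sub, eval_X, eval_C, sub_self, zero_mul, add_zero] at hev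
    exact hev.symm
  have hg1ne : g1.eval α ≠ 0 := by rw [hg1α]; exact hg'
  set m' := m - 1 with hm'def
  have hm' : m' + 1 = m := by omega
  set h1 : Polynomial K := (X - C α) ^ m' * v with h1def
  set ψ : Polynomial K := e1 * g1 ^ m' with hψdef
  set lam := ψ.eval α with hlamdef
  have hlam : lam ≠ 0 := by
    rw [hlamdef, hψdef, eval_mul, eval_pow]
    exact mul_ne_zero he1α (pow_ne_zero _ hg1ne)
  set w : Polynomial K := e * (g - C (g.eval α)) ^ m' with hwdef
  have hwA : w ∈ A :=
    A.mul_mem heA (pow_mem (A.sub_mem hgA (C_mem A _)) m')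
  have hw : w = h1 * ψ := by
    rw [hwdef, he1, hg1, h1def, hψdef, mul_pow]; ring
  have hfact' : h = h1 * (X - C α) := by
    rw [← hfact, h1def, ← hm', pow_succ]; ring
  have hdvd : h ∣ (w - C lam * h1) := by
    have heq : w - C lam * h1 = h1 * (ψ - C lam) := by rw [hw]; ring
    rw [heq, hfact']
    apply mul_dvd_mul_left
    apply dvd_iff_isRoot.mpr
    unfold IsRoot
    rw [eval_sub, eval_C, hlamdef, sub_self]
  obtain ⟨t, ht⟩ := hdvd
  have h1A : h1 ∈ A := by
    have h2 : w - C lam * h1 ∈ A := ht ▸ hmulA t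
    have h3 : C lam * h1 ∈ A := by
      have h4 := A.sub_mem hwA h2
      have h5 : w - (w - C lam * h1) = C lam * h1 := by ring
      rwa [h5] at h4
    have h6 := A.mul_mem (C_mem A lam⁻¹) h3
    rwa [← mul_assoc, ← C_mul, inv_mul_cancel₀ hlam, C_1, one_mul] at h6
  have h1J : h1 ∈ J := by
    intro p
    obtain ⟨p1, hp1⟩ : (X - C α) ∣ (p - C (p.eval α)) := X_sub_C_dvd_sub_C_eval
    have hpdec : p = C (p.eval α) + (X - C α) * p1 := by rw [← hp1]; ring
    have key : h1 * p = C (p.eval α) * h1 + h * p1 := by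
      rw [hfact']
      calc h1 * p = h1 * (C (p.eval α) + (X - C α) * p1) := by rw [← hpdec]
        _ = C (p.eval α) * h1 + h1 * (X - C α) * p1 := by ring
    rw [key]
    exact A.add_mem (A.mul_mem (C_mem A _) h1A) (hmulA p1)
  have hdvd1 : h ∣ h1 := by
    rw [hh] at h1J
    exact Ideal.mem_span_singleton.mp h1J
  have h1ne : h1 ≠ 0 :=
    mul_ne_zero (pow_ne_zero _ (X_sub_C_ne_zero α)) hv0
  have hle := natDegree_le_of_dvd hdvd1 h1ne
  have hXm : ((X - C α : Polynomial K) ^ m) ≠ 0 := pow_ne_zero _ (X_sub_C_ne_zero α)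
  have hXm' : ((X - C α : Polynomial K) ^ m') ≠ 0 := pow_ne_zero _ (X_sub_C_ne_zero α)
  have hdh : h.natDegree = m + v.natDegree := by
    rw [← hfact, natDegree_mul hXm hv0, natDegree_pow, natDegree_X_sub_C, mul_one]
  have hdh1 : h1.natDegree = m' + v.natDegree := by
    rw [h1def, natDegree_mul hXm' hv0, natDegree_pow, natDegree_X_sub_C, mul_one]
  omega
end

section
/- Let A be a K-subalgebra of K[x] of finite codimension and let α ∈ K. Then α ∈ Sp(A) if and only if there exists β ∈ K (possibly equal to α) such that (x − α)(x − β) divides f − f(α) (the polynomial f minus the constant polynomial with value f(α)) for every f ∈ A. -/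
open Polynomial

lemma sq_dvd_iff_aux {K : Type*} [Field K] [CharZero K] (p : K[X]) (α : K) :
    (X - C α) * (X - C α) ∣ p ↔ p.eval α = 0 ∧ (derivative p).eval α = 0 := by
  constructor
  · rintro ⟨q, rfl⟩
    simp [derivative_mul]
  · rintro ⟨h0, h1⟩
    obtain ⟨q, rfl⟩ := (dvd_iff_isRoot).2 h0
    rw [derivative_mul, derivative_sub, derivative_X, derivative_C, sub_zero, one_mul] at h1
    simp only [eval_add, eval_mul, eval_sub, eval_X, eval_C, sub_self, zero_mul, zero_add,
      add_zero] at h1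
    obtain ⟨r, rfl⟩ := (dvd_iff_isRoot (p := q) (a := α)).2 h1
    exact ⟨r, by ring⟩

theorem mem_spectrum_iff_divides
    {K : Type*} [Field K] [IsAlgClosed K] [CharZero K]
    (A : Subalgebra K (Polynomial K))
    (hfin : FiniteDimensional K (Polynomial K ⧸ Subalgebra.toSubmodule A))
    (α : K) :
    α ∈ subalgebraSpectrum A ↔
      ∃ β : K, ∀ f ∈ A,
        (Polynomial.X - Polynomial.C α) * (Polynomial.X - Polynomial.C β) ∣
          f - Polynomial.C (f.eval α) := by
  simp only [subalgebraSpectrum, Set.mem_setOf_eq]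
  constructor
  · rintro (h | ⟨β, hβ, h⟩)
    · refine ⟨α, fun f hf => ?_⟩
      rw [sq_dvd_iff_aux]
      constructor
      · simp
      · simp [h f hf]
    · refine ⟨β, fun f hf => ?_⟩
      have hc : IsCoprime (X - C α) (X - C β) :=
        isCoprime_X_sub_C_of_isUnit_sub (sub_ne_zero_of_ne (Ne.symm hβ)).isUnit
      refine hc.mul_dvd ?_ ?_
      · rw [dvd_iff_isRoot]; simp
      · rw [dvd_iff_isRoot]; simp [IsRoot, h f hf]
  · rintro ⟨β, h⟩
    by_cases hβ : β = α
    · subst hβ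
      left
      intro f hf
      have := ((sq_dvd_iff_aux _ _).1 (h f hf)).2
      simpa using this
    · right
      refine ⟨β, hβ, fun f hf => ?_⟩
      have hd : (X - C β) ∣ f - C (f.eval α) := (dvd_mul_left _ _).trans (h f hf)
      have := dvd_iff_isRoot.1 hd
      simp only [IsRoot, eval_sub, eval_C, sub_eq_zero] at this
      exact this.symm
end

section
/- Let A be a proper K-subalgebra of K[x] of finite codimension and let α ∈ K. Then α ∈ Sp(A) if and only if for every pair of monic polynomials p, q ∈ A whose degrees are relatively prime, α belongs to Sp(B), where B is the K-subalgebra of K[x] generated by p and q. -/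
open Polynomial

/-!
Passing to a subalgebra can only enlarge the spectrum, which gives one direction. Conversely,
if `α ∉ Sp(A)`, some `u ∈ A` has `u'(α) ≠ 0` and every `β ≠ α` is separated from `α` by an
element of `A`. Since `A` has finite codimension it contains monic polynomials of every large
degree, and adding a multiple of `u` to one of them gives a monic `p ∈ A` of degree `N > 0` with
`p'(α) ≠ 0`. The fibre `p⁻¹(p(α))` is finite, and over an infinite field a generic linear
combination of the separating polynomials separates `α` from all of it at once; adding such a
combination to a monic element of degree `M ≡ 1 [MOD N]` gives a monic `q ∈ A` separating `α`
from the rest of the fibre. Then `α ∉ Sp(K[p, q])`, and `gcd(N, M) = 1`.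
-/

open Filter

namespace Polynomial

variable {K : Type*} [Field K]

theorem support_subset_of_mem_span_X_pow {T : Set ℕ} {P : K[X]}
    (hP : P ∈ Submodule.span K ((X ^ ·) '' T)) : ↑P.support ⊆ T := by
  classical
  induction hP using Submodule.span_induction with
  | mem _ hx =>
    obtain ⟨n, hn, rfl⟩ := hx
    simpa [support_X_pow] using hn
  | zero => simp
  | add P Q _ _ hP hQ =>
    exact (Finset.coe_subset.2 (support_add (p := P) (q := Q))).trans
      (by push_cast; exact Set.union_subset hP hQ)
  | smul a P _ hP => exact (Finset.coe_subset.2 (support_smul a P)).trans hP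

theorem exists_monic_mem_natDegree_eq_of_mem {V : Submodule K K[X]} {P : K[X]} (hP : P ∈ V)
    (hP0 : P ≠ 0) : ∃ f ∈ V, f.Monic ∧ f.natDegree = P.natDegree :=
  ⟨C P.leadingCoeff⁻¹ * P, by rw [← smul_eq_C_mul]; exact V.smul_mem _ hP,
    by rw [mul_comm]; exact monic_mul_leadingCoeff_inv hP0,
    by rw [mul_comm]; exact natDegree_mul_leadingCoeff_inv P hP0⟩

/-- The powers `X ^ n` of the missing degrees `n` are linearly independent modulo `V`. -/
theorem eventually_exists_monic_mem_natDegree_eq (V : Submodule K K[X])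
    [FiniteDimensional K (K[X] ⧸ V)] : ∀ᶠ n in atTop, ∃ f ∈ V, f.Monic ∧ f.natDegree = n := by
  set T : Set ℕ := {n | ¬∃ f ∈ V, f.Monic ∧ f.natDegree = n}
  have hdisj : Disjoint (Submodule.span K (Set.range fun n : T => (X : K[X]) ^ (n : ℕ)))
      (LinearMap.ker V.mkQ) := by
    rw [Submodule.ker_mkQ, Submodule.disjoint_def]
    intro P hspan hV
    by_contra hP0
    rw [← Set.image_eq_range] at hspan
    exact support_subset_of_mem_span_X_pow hspan (natDegree_mem_support_of_nonzero hP0)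
      (exists_monic_mem_natDegree_eq_of_mem hV hP0)
  have hli : LinearIndependent K fun n : T => (X : K[X]) ^ (n : ℕ) := by
    simpa [coe_basisMonomials, Function.comp_def, X_pow_eq_monomial] using
      (basisMonomials K).linearIndependent.comp _ Subtype.val_injective
  have : Finite T := (hli.map hdisj).finite
  rw [← Nat.cofinite_eq_atTop]
  filter_upwards [(Set.toFinite T).eventually_cofinite_notMem] with n hn
  simpa [T] using hn

theorem Monic.add_smul_of_natDegree_lt {e u : K[X]} (he : e.Monic)
    (hu : u.natDegree < e.natDegree) (c : K) :
    (e + c • u).Monic ∧ (e + c • u).natDegree = e.natDegree := by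
  have hdeg : (c • u).degree < e.degree := degree_lt_degree ((natDegree_smul_le c u).trans_lt hu)
  exact ⟨he.add_of_left hdeg, natDegree_add_eq_left_of_degree_lt hdeg⟩

theorem finite_setOf_eval_eq {p : K[X]} (hp : 0 < p.natDegree) (c : K) :
    {β | p.eval β = c}.Finite := by
  have hpc : p - C c ≠ 0 := fun h => by
    rw [← natDegree_sub_C (a := c), h, natDegree_zero] at hp
    exact hp.false
  simpa [sub_eq_zero] using finite_setOfPred_isRoot hpc

theorem eventually_exists_monic_mem_derivative_eval_ne_zero {V : Submodule K K[X]}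
    (hV : ∀ᶠ n in atTop, ∃ f ∈ V, f.Monic ∧ f.natDegree = n) {u : K[X]} (hu : u ∈ V) {α : K}
    (hu' : (derivative u).eval α ≠ 0) :
    ∀ᶠ n in atTop, ∃ p ∈ V, p.Monic ∧ p.natDegree = n ∧ (derivative p).eval α ≠ 0 := by
  filter_upwards [hV, eventually_gt_atTop u.natDegree] with n ⟨e, he, hem, hen⟩ hn
  subst hen
  set c := (1 - (derivative e).eval α) / (derivative u).eval α
  obtain ⟨hm, hdeg⟩ := hem.add_smul_of_natDegree_lt hn c
  refine ⟨e + c • u, V.add_mem he (V.smul_mem c hu), hm, hdeg, ?_⟩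
  have h1 : (derivative (e + c • u)).eval α = 1 := by
    simp only [derivative_add, derivative_smul, eval_add, eval_smul, smul_eq_mul, c]
    field_simp
    ring
  exact h1 ▸ one_ne_zero

variable [Infinite K]

/-- Each `β` rules out at most one `t`, the root of `t ↦ (f + t • h)(β) - (f + t • h)(α)`. -/
theorem exists_eval_add_smul_ne (f h : K[X]) (α : K) (F : Finset K)
    (hF : ∀ β ∈ F, f.eval β ≠ f.eval α ∨ h.eval β ≠ h.eval α) :
    ∃ t : K, ∀ β ∈ F, (f + t • h).eval β ≠ (f + t • h).eval α := by
  classical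
  obtain ⟨t, ht⟩ := Infinite.exists_notMem_finset
    (F.image fun β => (f.eval α - f.eval β) / (h.eval β - h.eval α))
  refine ⟨t, fun β hβ heq => ?_⟩
  simp only [eval_add, eval_smul, smul_eq_mul] at heq
  by_cases hh : h.eval β = h.eval α
  · exact (hF β hβ).resolve_right (not_not.2 hh) (by rw [hh] at heq; linear_combination heq)
  · refine ht (Finset.mem_image.2 ⟨β, hβ, ?_⟩)
    rw [div_eq_iff (sub_ne_zero.2 hh)]
    linear_combination -heq

theorem exists_mem_forall_eval_ne (V : Submodule K K[X]) (α : K) (F : Finset K)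
    (hF : ∀ β ∈ F, ∃ f ∈ V, f.eval β ≠ f.eval α) :
    ∃ h ∈ V, ∀ β ∈ F, h.eval β ≠ h.eval α := by
  classical
  induction F using Finset.induction with
  | empty => exact ⟨0, V.zero_mem, by simp⟩
  | insert β₀ F _ ih =>
    obtain ⟨h, hV, hsep⟩ := ih fun β hβ => hF β (Finset.mem_insert_of_mem hβ)
    obtain ⟨f₀, hf₀V, hf₀⟩ := hF β₀ (Finset.mem_insert_self _ _)
    obtain ⟨t, ht⟩ := exists_eval_add_smul_ne h f₀ α (insert β₀ F) fun β hβ => by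
      rcases Finset.mem_insert.1 hβ with rfl | hβF
      exacts [Or.inr hf₀, Or.inl (hsep β hβF)]
    exact ⟨h + t • f₀, V.add_mem hV (V.smul_mem t hf₀V), ht⟩

theorem eventually_exists_monic_mem_forall_eval_ne {V : Submodule K K[X]}
    (hV : ∀ᶠ n in atTop, ∃ f ∈ V, f.Monic ∧ f.natDegree = n) {h : K[X]} (hh : h ∈ V) {α : K}
    {F : Finset K} (hF : ∀ β ∈ F, h.eval β ≠ h.eval α) :
    ∀ᶠ n in atTop, ∃ q ∈ V, q.Monic ∧ q.natDegree = n ∧ ∀ β ∈ F, q.eval β ≠ q.eval α := by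
  filter_upwards [hV, eventually_gt_atTop h.natDegree] with n ⟨e, he, hem, hen⟩ hn
  subst hen
  obtain ⟨t, ht⟩ := exists_eval_add_smul_ne e h α F fun β hβ => Or.inr (hF β hβ)
  obtain ⟨hm, hdeg⟩ := hem.add_smul_of_natDegree_lt hn t
  exact ⟨e + t • h, V.add_mem he (V.smul_mem t hh), hm, hdeg, ht⟩

end Polynomial

section Spectrum

variable {K : Type*} [Field K]

theorem subalgebraSpectrum_antitone : Antitone (subalgebraSpectrum (K := K)) := by
  intro A B hAB α hα
  rcases hα with h | ⟨β, hβ, h⟩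
  exacts [Or.inl fun f hf => h f (hAB hf), Or.inr ⟨β, hβ, fun f hf => h f (hAB hf)⟩]

theorem notMem_subalgebraSpectrum_iff {A : Subalgebra K K[X]} {α : K} :
    α ∉ subalgebraSpectrum A ↔
      (∃ u ∈ A, (derivative u).eval α ≠ 0) ∧ ∀ β ≠ α, ∃ f ∈ A, f.eval β ≠ f.eval α := by
  simp only [subalgebraSpectrum, Set.mem_ofPred_eq, not_or, not_forall, not_exists, not_and,
    exists_prop, ne_comm (a := eval α _)]

theorem notMem_subalgebraSpectrum_of_mem {B : Subalgebra K K[X]} {p q : K[X]} {α : K}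
    (hp : p ∈ B) (hq : q ∈ B) (hp' : (derivative p).eval α ≠ 0)
    (hq_sep : ∀ β ≠ α, p.eval β = p.eval α → q.eval β ≠ q.eval α) :
    α ∉ subalgebraSpectrum B :=
  notMem_subalgebraSpectrum_iff.2 ⟨⟨p, hp, hp'⟩, fun β hβ => by
    by_cases hpβ : p.eval β = p.eval α
    exacts [⟨q, hq, hq_sep β hβ hpβ⟩, ⟨p, hp, hpβ⟩]⟩

theorem exists_monic_coprime_notMem_subalgebraSpectrum_adjoin [Infinite K]
    (A : Subalgebra K K[X]) [FiniteDimensional K (K[X] ⧸ Subalgebra.toSubmodule A)] {α : K}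
    (hα : α ∉ subalgebraSpectrum A) :
    ∃ p ∈ A, ∃ q ∈ A, p.Monic ∧ q.Monic ∧ Nat.Coprime p.natDegree q.natDegree ∧
      α ∉ subalgebraSpectrum (Algebra.adjoin K {p, q}) := by
  classical
  obtain ⟨⟨u, hu, hu'⟩, hsep⟩ := notMem_subalgebraSpectrum_iff.1 hα
  have hV := eventually_exists_monic_mem_natDegree_eq (Subalgebra.toSubmodule A)
  obtain ⟨N, ⟨p, hp, hpm, rfl, hp'⟩, hN⟩ :=
    ((eventually_exists_monic_mem_derivative_eval_ne_zero hV hu hu').and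
      (eventually_gt_atTop 0)).exists
  set F := (finite_setOf_eval_eq hN (p.eval α)).toFinset.erase α
  obtain ⟨h, hh, hhF⟩ := exists_mem_forall_eval_ne (Subalgebra.toSubmodule A) α F
    fun β hβ => hsep β (Finset.ne_of_mem_erase hβ)
  obtain ⟨M, ⟨q, hq, hqm, rfl, hqF⟩, hM⟩ :=
    ((eventually_exists_monic_mem_forall_eval_ne hV hh hhF).and_frequently
      (Nat.frequently_atTop_modEq_one hN.ne')).exists
  have hpq : Nat.Coprime p.natDegree q.natDegree := by
    rw [Nat.coprime_comm, Nat.Coprime, hM.2.gcd_eq, Nat.gcd_one_left]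
  refine ⟨p, hp, q, hq, hpm, hqm, hpq, notMem_subalgebraSpectrum_of_mem
    (Algebra.subset_adjoin (Set.mem_insert _ _))
    (Algebra.subset_adjoin (Set.mem_insert_of_mem _ rfl)) hp'
    fun β hβ hpβ => hqF β (by simp [F, hβ, hpβ])⟩

end Spectrum

theorem mem_spectrum_iff_forall_pairs_general
    {K : Type*} [Field K] [CharZero K]
    (A : Subalgebra K (Polynomial K))
    (hfin : FiniteDimensional K (Polynomial K ⧸ Subalgebra.toSubmodule A))
    (α : K) :
    α ∈ subalgebraSpectrum A ↔
      ∀ p q : Polynomial K, p ∈ A → q ∈ A → p.Monic → q.Monic →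
        Nat.Coprime p.natDegree q.natDegree →
        α ∈ subalgebraSpectrum (Algebra.adjoin K {p, q}) := by
  refine ⟨fun hα p q hp hq _ _ _ => subalgebraSpectrum_antitone ?_ hα, fun H => ?_⟩
  · exact Algebra.adjoin_le (Set.insert_subset hp (Set.singleton_subset_iff.2 hq))
  · by_contra hα
    obtain ⟨p, hp, q, hq, hpm, hqm, hpq, hα_pq⟩ :=
      exists_monic_coprime_notMem_subalgebraSpectrum_adjoin A hα
    exact hα_pq (H p q hp hq hpm hqm hpq)

theorem mem_spectrum_iff_forall_pairs
    {K : Type*} [Field K] [IsAlgClosed K] [CharZero K]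
    (A : Subalgebra K (Polynomial K)) (hproper : A ≠ ⊤)
    (hfin : FiniteDimensional K (Polynomial K ⧸ Subalgebra.toSubmodule A))
    (α : K) :
    α ∈ subalgebraSpectrum A ↔
      ∀ p q : Polynomial K, p ∈ A → q ∈ A → p.Monic → q.Monic →
        Nat.Coprime p.natDegree q.natDegree →
        α ∈ subalgebraSpectrum (Algebra.adjoin K {p, q}) :=
  mem_spectrum_iff_forall_pairs_general A hfin α
end

section
/- Let B be a K-subalgebra of K[x] of finite codimension, let α, β ∈ K, and suppose the K-subalgebra A of K[x] is obtained from B in one of the following two ways: (a) A = {f ∈ B : f(α) = f(β)}, or (b) β = α and A = {f ∈ B : D(f) = 0} for some α-derivation D of B. If λ ∈ K satisfies λ ∉ Sp(B) and λ ∉ {α, β}, then λ ∉ Sp(A). -/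
open Polynomial

/-- `D` is an `α`-derivation of the subalgebra `B` of `K[x]`: a `K`-linear map `B → K` with
`D(fg) = D(f)·g(α) + f(α)·D(g)`. -/
def IsAlphaDerivation {K : Type*} [Field K] (B : Subalgebra K (Polynomial K)) (α : K)
    (D : B →ₗ[K] K) : Prop :=
  ∀ f g : B, D (f * g) = D f * (g : Polynomial K).eval α + (f : Polynomial K).eval α * D g

lemma deriv_eval_aux {K : Type*} [Field K] (u q : Polynomial K) (lam : K) :
    (Polynomial.derivative (u * (u * q))).eval lam =
      u.eval lam * (2 * (Polynomial.derivative u).eval lam * q.eval lam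
        + u.eval lam * (Polynomial.derivative q).eval lam) := by
  simp only [derivative_mul, eval_add, eval_mul]
  ring

theorem no_ghost_elements
    {K : Type*} [Field K] [IsAlgClosed K] [CharZero K]
    (B A : Subalgebra K (Polynomial K))
    (hfin : FiniteDimensional K (Polynomial K ⧸ Subalgebra.toSubmodule B))
    (α β : K)
    (hcase :
      (∀ f : Polynomial K, f ∈ A ↔ f ∈ B ∧ f.eval α = f.eval β) ∨
      (β = α ∧ ∃ D : B →ₗ[K] K, IsAlphaDerivation B α D ∧
        ∀ f : Polynomial K, f ∈ A ↔ ∃ h : f ∈ B, D ⟨f, h⟩ = 0))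
    (lam : K) (hlamB : lam ∉ subalgebraSpectrum B) (hlamα : lam ≠ α) (hlamβ : lam ≠ β) :
    lam ∉ subalgebraSpectrum A := by
  -- constants are in B
  have hC : ∀ c : K, (C c : Polynomial K) ∈ B := fun c => by
    simpa [Polynomial.algebraMap_eq] using B.algebraMap_mem c
  -- key membership lemma
  have memA : ∀ g h : Polynomial K, g ∈ B → h ∈ B → g.eval α = 0 → g.eval β = 0 →
      h.eval α = 0 → h.eval β = 0 → g * h ∈ A := by
    intro g h hg hh hgα hgβ hhα hhβ
    rcases hcase with hA | ⟨hβα, D, hD, hA⟩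
    · exact (hA _).2 ⟨mul_mem hg hh, by simp [hgα, hgβ, hhα, hhβ]⟩
    · refine (hA _).2 ⟨mul_mem hg hh, ?_⟩
      have : (⟨g * h, mul_mem hg hh⟩ : B) = (⟨g, hg⟩ : B) * ⟨h, hh⟩ := rfl
      rw [this, hD]
      simp [hgα, hhα]
  -- unpack hlamB
  simp only [subalgebraSpectrum, Set.mem_setOf_eq, not_or] at hlamB
  push_neg at hlamB
  obtain ⟨⟨p, hpB, hp⟩, hsep⟩ := hlamB
  obtain ⟨s, hsB, hs⟩ := hsep α (Ne.symm hlamα)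
  obtain ⟨t, htB, ht⟩ := hsep β (Ne.symm hlamβ)
  set u : Polynomial K := (s - C (s.eval α)) * (t - C (t.eval β)) with hu
  have huB : u ∈ B := mul_mem (sub_mem hsB (hC _)) (sub_mem htB (hC _))
  have huα : u.eval α = 0 := by simp [hu]
  have huβ : u.eval β = 0 := by simp [hu]
  have hulam : u.eval lam ≠ 0 := by
    simp only [hu, eval_mul, eval_sub, eval_C]
    exact mul_ne_zero (sub_ne_zero.2 hs) (sub_ne_zero.2 ht)
  simp only [subalgebraSpectrum, Set.mem_setOf_eq, not_or]
  push_neg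
  constructor
  · -- find f ∈ A with f'(lam) ≠ 0
    have key : ∃ q ∈ B, 2 * (derivative u).eval lam * q.eval lam
        + u.eval lam * (derivative q).eval lam ≠ 0 := by
      by_cases h0 : 2 * (derivative u).eval lam * p.eval lam
          + u.eval lam * (derivative p).eval lam = 0
      · refine ⟨p + 1, add_mem hpB (one_mem B), ?_⟩
        simp only [eval_add, eval_one, derivative_add, derivative_one, add_zero]
        intro h1
        have hb : (derivative u).eval lam = 0 := by
          have h2 : 2 * (derivative u).eval lam = 0 := by linear_combination h1 - h0
          have h3 : (2 : K) ≠ 0 := two_ne_zero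
          exact (mul_eq_zero.1 h2).resolve_left h3
        rw [hb] at h0
        simp only [mul_zero, zero_mul, zero_add] at h0
        exact hp ((mul_eq_zero.1 h0).resolve_left hulam)
      · exact ⟨p, hpB, h0⟩
    obtain ⟨q, hqB, hq⟩ := key
    refine ⟨u * (u * q), memA u (u * q) huB (mul_mem huB hqB)
      huα huβ (by simp [huα]) (by simp [huβ]), ?_⟩
    rw [deriv_eval_aux]
    exact mul_ne_zero hulam hq
  · -- separation
    intro γ hγ
    by_cases hsq : u.eval lam * u.eval lam = u.eval γ * u.eval γ
    · -- then u(γ) ≠ 0; pick r separating lam, γ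
      have huγ : u.eval γ ≠ 0 := fun h => hulam (by
        rw [h, mul_zero] at hsq
        exact mul_self_eq_zero.1 hsq)
      obtain ⟨r, hrB, hr⟩ := hsep γ hγ
      refine ⟨u * (u * r), memA u (u * r) huB (mul_mem huB hrB)
        huα huβ (by simp [huα]) (by simp [huβ]), ?_⟩
      simp only [eval_mul]
      intro h
      apply hr
      have h2 : u.eval γ * u.eval γ * r.eval lam = u.eval γ * u.eval γ * r.eval γ := by
        calc u.eval γ * u.eval γ * r.eval lam = u.eval lam * u.eval lam * r.eval lam := by
              rw [hsq]
          _ = u.eval γ * u.eval γ * r.eval γ := by linear_combination h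
      exact mul_left_cancel₀ (mul_ne_zero huγ huγ) h2
    · refine ⟨u * (u * 1), memA u (u * 1) huB (mul_mem huB (one_mem B))
        huα huβ (by simp [huα]) (by simp [huβ]), ?_⟩
      simp only [eval_mul, eval_one, mul_one]
      exact hsq
end

section
/- Let A be a proper K-subalgebra of K[x] of finite codimension. Then Sp(A) is finite, and writing Sp(A) = {α_1, ..., α_s} and π_A = (x − α_1)(x − α_2)⋯(x − α_s), there exists an integer N > 1 such that x^i · π_A^N ∈ A for every integer i ≥ 0. -/
open Polynomial

/-
The conductor `𝔠 = {f | f * K[X] ⊆ A}` is an ideal of `K[X]` contained in `A`. It is nonzero: for a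
nonconstant `a ∈ A`, the minimal polynomial `μ` of multiplication by `a` on the finite-dimensional
space `K[X] ⧸ A` gives `μ(a) ∈ 𝔠`. Write `𝔠 = (h)`. Since `h` and `h * X` lie in `A`, every point
of the spectrum is a root of `h`. Conversely, if `α` were a root of `h` outside the spectrum, an
element of `A` with a simple zero at `α` and elements separating `α` from the other roots of `h`
would put `h / (X - α)` into `𝔠 = (h)`, which is impossible. So the spectrum is the set of roots
of `h`, hence `h ∣ π_A ^ N` once `N ≥ deg h`, and `X ^ i * π_A ^ N ∈ 𝔠 ⊆ A`.
-/

namespace Subalgebra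

variable {R S : Type*} [CommRing R] [CommRing S] [Algebra R S] (A : Subalgebra R S)

def conductor : Ideal S where
  carrier := {a | ∀ b, a * b ∈ A}
  add_mem' ha hb c := by rw [add_mul]; exact add_mem (ha c) (hb c)
  zero_mem' c := by rw [zero_mul]; exact zero_mem A
  smul_mem' c a ha b := by rw [smul_eq_mul, mul_comm c, mul_assoc]; exact ha (c * b)

def mulLeftQuotient : A →ₐ[R] Module.End R (S ⧸ toSubmodule A) where
  toFun a := (toSubmodule A).mapQ _ (LinearMap.mulLeft R (a : S)) fun _ hx => A.mul_mem a.2 hx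
  map_one' := by ext; simp
  map_mul' a b := by ext; exact congrArg _ (mul_assoc _ _ _)
  map_zero' := by ext; simp
  map_add' a b := by ext; exact congrArg _ (add_mul _ _ _)
  commutes' c := by ext; exact congrArg _ (Algebra.smul_def c _).symm

variable {A}

theorem mem_of_mem_conductor {a : S} (ha : a ∈ A.conductor) : a ∈ A := by
  simpa using ha 1

@[simp]
theorem mulLeftQuotient_mk (a : A) (b : S) :
    A.mulLeftQuotient a (Submodule.Quotient.mk b) = Submodule.Quotient.mk (a * b) :=
  rfl

theorem aeval_mem_conductor {a : A} {p : R[X]} (hp : aeval (A.mulLeftQuotient a) p = 0) :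
    aeval (a : S) p ∈ A.conductor := by
  intro b
  rw [aeval_algHom_apply] at hp
  have := LinearMap.congr_fun hp (Submodule.Quotient.mk b)
  rwa [mulLeftQuotient_mk, LinearMap.zero_apply, Submodule.Quotient.mk_eq_zero,
    ← Subalgebra.aeval_coe] at this

end Subalgebra

namespace Polynomial

variable {K : Type*} [Field K]

theorem dvd_prod_pow_of_isRoot [IsAlgClosed K] {p : K[X]} (hp : p ≠ 0) {n : ℕ}
    (hn : p.natDegree ≤ n) {s : Finset K} (hs : ∀ β, p.IsRoot β → β ∈ s) (r : K → K[X])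
    (hr : ∀ β ∈ s, (r β).IsRoot β) : p ∣ ∏ β ∈ s, r β ^ n := by
  classical
  have hroots : p.roots.toFinset ⊆ s := fun β hβ => hs β (isRoot_of_mem_roots
    (Multiset.mem_toFinset.1 hβ))
  rw [← C_leadingCoeff_mul_prod_multiset_X_sub_C (IsAlgClosed.card_roots_eq_natDegree (p := p)),
    Finset.prod_multiset_map_count]
  refine (C_mul_dvd (leadingCoeff_ne_zero.2 hp)).2 <|
    (Finset.prod_dvd_prod_of_dvd _ _ fun β hβ => ?_).trans
      (Finset.prod_dvd_prod_of_subset _ _ _ hroots)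
  calc (X - C β) ^ p.roots.count β ∣ (X - C β) ^ n :=
        pow_dvd_pow _ ((Multiset.count_le_card _ _).trans
          (IsAlgClosed.card_roots_eq_natDegree.le.trans hn))
    _ ∣ r β ^ n := pow_dvd_pow_of_dvd (dvd_iff_isRoot.2 (hr β (hroots hβ))) n

theorem exists_sub_C_eval_eq_X_sub_C_mul (f : K[X]) (α : K) :
    ∃ v : K[X], f - C (f.eval α) = (X - C α) * v ∧ v.eval α = (derivative f).eval α := by
  obtain ⟨v, hv⟩ := X_sub_C_dvd_sub_C_eval (p := f) (a := α)
  refine ⟨v, hv, ?_⟩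
  simpa using congrArg (fun q => (derivative q).eval α) hv.symm

end Polynomial

open Subalgebra

section

variable {K : Type*} [Field K] {A : Subalgebra K K[X]} {α : K}

theorem exists_natDegree_pos_mem [FiniteDimensional K (K[X] ⧸ toSubmodule A)] :
    ∃ a ∈ A, 0 < a.natDegree := by
  by_contra! hA
  obtain rfl : A = ⊥ := eq_bot_iff.2 fun a ha => by
    rw [eq_C_of_natDegree_eq_zero (Nat.le_zero.1 (hA a ha))]
    exact algebraMap_mem _ _
  have : Module.Finite K (toSubmodule (⊥ : Subalgebra K K[X])) := finite_bot
  exact not_finite (Module.Finite.of_submodule_quotient (toSubmodule (⊥ : Subalgebra K K[X])))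

theorem conductor_ne_bot [FiniteDimensional K (K[X] ⧸ toSubmodule A)] : A.conductor ≠ ⊥ := by
  obtain ⟨a, ha, hdeg⟩ := exists_natDegree_pos_mem (A := A)
  set L := A.mulLeftQuotient ⟨a, ha⟩
  refine (Submodule.ne_bot_iff _).2 ⟨_, aeval_mem_conductor (minpoly.aeval K L), ?_⟩
  rw [← comp_eq_aeval, Ne, comp_eq_zero_iff, not_or, not_and_or]
  exact ⟨minpoly.ne_zero (Algebra.IsIntegral.isIntegral L),
    Or.inr fun h => hdeg.ne' (by rw [show a = C (a.coeff 0) from h, natDegree_C])⟩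

theorem isRoot_of_mem_subalgebraSpectrum {h : K[X]} (hh : h ∈ A.conductor)
    (hα : α ∈ subalgebraSpectrum A) : h.IsRoot α := by
  have hA : h ∈ A := mem_of_mem_conductor hh
  have hXA : h * X ∈ A := hh X
  rcases hα with hder | ⟨β, hβα, hval⟩
  · simpa [derivative_mul, hder h hA] using hder _ hXA
  · have hXval : h.eval α * α = h.eval β * β := by simpa using hval _ hXA
    have : h.eval α * (α - β) = 0 := by linear_combination hXval - β * hval h hA
    exact (mul_eq_zero.1 this).resolve_right (sub_ne_zero.2 hβα.symm)


theorem mem_conductor_of_X_sub_C_mul_mem_conductor {q u : K[X]}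
    (hq : (X - C α) * q ∈ A.conductor) (hqu : q * u ∈ A) (hu : u.eval α ≠ 0) :
    q ∈ A.conductor := by
  have hmod : ∀ t, q * t - t.eval α • q ∈ A := fun t => by
    obtain ⟨t', ht'⟩ := X_sub_C_dvd_sub_C_eval (p := t) (a := α)
    have : q * t - t.eval α • q = (X - C α) * q * t' := by
      rw [smul_eq_C_mul]
      linear_combination q * ht'
    exact this ▸ hq t'
  have hqA : q ∈ A := by
    have := A.smul_mem (sub_sub_cancel (q * u) _ ▸ sub_mem hqu (hmod u)) (u.eval α)⁻¹
    rwa [inv_smul_smul₀ hu] at this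
  intro t
  simpa using add_mem (hmod t) (A.smul_mem hqA (t.eval α))

theorem exists_mem_dvd_eval_ne_zero [IsAlgClosed K]
    (hsep : ∀ β, β ≠ α → ∃ f ∈ A, f.eval α ≠ f.eval β) {g : K[X]} (hg : g.eval α ≠ 0) :
    ∃ w ∈ A, g ∣ w ∧ w.eval α ≠ 0 := by
  classical
  choose! f hfA hf using hsep
  have hg0 : g ≠ 0 := by rintro rfl; simp at hg
  have hne : ∀ β ∈ g.roots.toFinset, β ≠ α := fun β hβ hβα =>
    hg (hβα ▸ isRoot_of_mem_roots (Multiset.mem_toFinset.1 hβ))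
  refine ⟨∏ β ∈ g.roots.toFinset, (f β - C ((f β).eval β)) ^ g.natDegree,
    prod_mem fun β hβ => pow_mem (sub_mem (hfA β (hne β hβ)) (algebraMap_mem A _)) _,
    dvd_prod_pow_of_isRoot hg0 le_rfl
      (fun β hβ => Multiset.mem_toFinset.2 ((mem_roots hg0).2 hβ)) _ fun β _ => by simp, ?_⟩
  simp only [eval_prod, eval_pow, eval_sub, eval_C]
  exact Finset.prod_ne_zero_iff.2 fun β hβ => pow_ne_zero _ (sub_ne_zero.2 (hf β (hne β hβ)))

theorem exists_X_sub_C_mul_mem_conductor [IsAlgClosed K] {h : K[X]} (hh : h ∈ A.conductor)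
    (h0 : h ≠ 0) (hα : h.IsRoot α) (hSp : α ∉ subalgebraSpectrum A) :
    ∃ q ∈ A.conductor, h = (X - C α) * q := by
  simp only [subalgebraSpectrum, Set.mem_ofPred_eq, not_or, not_forall, not_exists, not_and,
    exists_prop] at hSp
  obtain ⟨⟨f, hfA, hf⟩, hsep⟩ := hSp
  obtain ⟨k, hk⟩ := Nat.exists_eq_add_one_of_ne_zero ((rootMultiplicity_pos h0).2 hα).ne'
  set g := h /ₘ (X - C α) ^ h.rootMultiplicity α
  have hgh : h = (X - C α) ^ (k + 1) * g := hk ▸ (pow_mul_divByMonic_rootMultiplicity_eq h α).symm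
  have hgα : g.eval α ≠ 0 := eval_divByMonic_pow_rootMultiplicity_ne_zero α h0
  obtain ⟨v, hv, hvα⟩ := exists_sub_C_eval_eq_X_sub_C_mul f α
  obtain ⟨w, hwA, ⟨w', rfl⟩, hwα⟩ := exists_mem_dvd_eval_ne_zero hsep hgα
  refine ⟨(X - C α) ^ k * g, ?_, by rw [hgh]; ring⟩
  -- `(f - C (f.eval α)) ^ k * w` is `(X - C α) ^ k * g` times a cofactor not vanishing at `α`
  refine mem_conductor_of_X_sub_C_mul_mem_conductor (α := α) (u := v ^ k * w') ?_ ?_ ?_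
  · rwa [← mul_assoc, ← pow_succ', ← hgh]
  · have : (X - C α) ^ k * g * (v ^ k * w') = (f - C (f.eval α)) ^ k * (g * w') := by
      rw [hv, mul_pow]; ring
    exact this ▸ mul_mem (pow_mem (sub_mem hfA (algebraMap_mem A _)) k) hwA
  · simp only [eval_mul, eval_pow, mul_ne_zero_iff] at hwα ⊢
    exact ⟨pow_ne_zero k (hvα ▸ hf), hwα.2⟩

theorem mem_subalgebraSpectrum_of_isRoot [IsAlgClosed K] {h : K[X]}
    (hgen : A.conductor = Ideal.span {h}) (h0 : h ≠ 0) (hα : h.IsRoot α) :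
    α ∈ subalgebraSpectrum A := by
  by_contra hSp
  have hh : h ∈ A.conductor := hgen ▸ Ideal.mem_span_singleton_self h
  obtain ⟨q, hq, rfl⟩ := exists_X_sub_C_mul_mem_conductor hh h0 hα hSp
  rw [hgen, Ideal.mem_span_singleton, ← one_mul q, ← mul_assoc, mul_one,
    mul_dvd_mul_iff_right (right_ne_zero_of_mul h0)] at hq
  exact not_isUnit_X_sub_C α (isUnit_of_dvd_one hq)

end

theorem power_of_spectrum_polynomial_mem_general
    {K : Type*} [Field K] [IsAlgClosed K]
    (A : Subalgebra K (Polynomial K))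
    (hfin : FiniteDimensional K (Polynomial K ⧸ Subalgebra.toSubmodule A)) :
    ∃ hSp : (subalgebraSpectrum A).Finite, ∃ N : ℕ, 1 < N ∧
      ∀ i : ℕ,
        Polynomial.X ^ i *
          (∏ α ∈ hSp.toFinset, (Polynomial.X - Polynomial.C α)) ^ N ∈ A := by
  obtain ⟨h, hgen⟩ := (IsPrincipalIdealRing.principal A.conductor).principal
  have hh : h ∈ A.conductor := hgen ▸ Ideal.mem_span_singleton_self h
  have h0 : h ≠ 0 := by
    rintro rfl
    exact conductor_ne_bot (hgen.trans (Submodule.span_singleton_eq_bot.2 rfl))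
  have hSp : (subalgebraSpectrum A).Finite :=
    (finite_setOfPred_isRoot h0).subset fun α hα => isRoot_of_mem_subalgebraSpectrum hh hα
  refine ⟨hSp, max 2 h.natDegree, by omega, fun i => mem_of_mem_conductor ?_⟩
  refine Ideal.mul_mem_left _ _ ?_
  rw [hgen, Ideal.mem_span_singleton, ← Finset.prod_pow]
  exact dvd_prod_pow_of_isRoot h0 (le_max_right _ _)
    (fun β hβ => hSp.mem_toFinset.2 (mem_subalgebraSpectrum_of_isRoot hgen h0 hβ)) _
    fun β _ => root_X_sub_C.2 rfl

theorem power_of_spectrum_polynomial_mem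
    {K : Type*} [Field K] [IsAlgClosed K] [CharZero K]
    (A : Subalgebra K (Polynomial K)) (hproper : A ≠ ⊤)
    (hfin : FiniteDimensional K (Polynomial K ⧸ Subalgebra.toSubmodule A)) :
    ∃ hSp : (subalgebraSpectrum A).Finite, ∃ N : ℕ, 1 < N ∧
      ∀ i : ℕ,
        Polynomial.X ^ i *
          (∏ α ∈ hSp.toFinset, (Polynomial.X - Polynomial.C α)) ^ N ∈ A :=
  power_of_spectrum_polynomial_mem_general A hfin
end

section
/- Let m and n be positive integers with gcd(m, n) = 1. Then the characteristic polynomial of the pair of monomials x^m and x^n equals x^{(m−1)(n−1)}, i.e. χ_{x^m, x^n}(x) = x^{(m−1)(n−1)}. -/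
open Polynomial

/-- The resultant of two polynomials, defined as the determinant of their Sylvester matrix
(with coefficients listed in ascending order of degree). -/
noncomputable def resultant {R : Type*} [CommRing R] (f g : Polynomial R) : R :=
  Matrix.det (Matrix.of fun (i j : Fin (g.natDegree + f.natDegree)) =>
    if (i : ℕ) < g.natDegree then
      (if (i : ℕ) ≤ (j : ℕ) then f.coeff ((j : ℕ) - (i : ℕ)) else 0)
    else
      (if (i : ℕ) - g.natDegree ≤ (j : ℕ) then g.coeff ((j : ℕ) - ((i : ℕ) - g.natDegree))
       else 0))

/-- For `p ∈ K[x]`, the polynomial `P(x,y) = (p(x) − p(y))/(x − y)`, viewed as a polynomial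
in `y` with coefficients in `K[x]` (the outer variable is `y`). -/
noncomputable def divDiff {K : Type*} [Field K] (p : Polynomial K) :
    Polynomial (Polynomial K) :=
  (p.map (Polynomial.C : K →+* Polynomial K) - Polynomial.C p) /ₘ
    (Polynomial.X - Polynomial.C Polynomial.X)

/-- The characteristic polynomial `χ_{p,q} = Res_y(P(x,y), Q(x,y))` of the pair `p, q`. -/
noncomputable def charPoly {K : Type*} [Field K] (p q : Polynomial K) : Polynomial K :=
  _root_.resultant (divDiff p) (divDiff q)

/-!
For `m = a + 1`, `divDiff (X ^ m)` is the homogeneous geometric sum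
`S_a = ∑_{i ≤ a} y^i x^(a-i)`, and `S_(a+b+1) = x^(b+1) S_a + y^(a+1) S_b`. Removing the multiple
of `S_b` from the first argument of the resultant and pulling out the scalar gives
`Res(S_(a+b+1), S_b) = x^(b(b+1)) Res(S_a, S_b)`, which is one subtraction step of the Euclidean
algorithm on `(a + b + 2, b + 1)`. Running it down to `gcd(m, n) = 1` collects exactly
`x^((m-1)(n-1))`; no sign survives, because `b(b+1)` is even and two coprime numbers cannot both
be even.
-/

open Finset

theorem Nat.Coprime.even_mul_of_add_one {a b : ℕ} (h : Nat.Coprime (a + 1) (b + 1)) :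
    Even (a * b) := by
  by_contra hab
  obtain ⟨ha, hb⟩ := Nat.odd_mul.mp (Nat.not_even_iff_odd.mp hab)
  exact Nat.not_coprime_of_dvd_of_dvd one_lt_two (even_iff_two_dvd.mp ha.add_one)
    (even_iff_two_dvd.mp hb.add_one) h

namespace Polynomial

variable {R : Type*} [CommRing R]

noncomputable def geomSumXC (r : R) (a : ℕ) : R[X] :=
  ∑ i ∈ range (a + 1), X ^ i * C r ^ (a - i)

variable (r : R)

theorem coeff_geomSumXC (a k : ℕ) :
    (geomSumXC r a).coeff k = if k ≤ a then r ^ (a - k) else 0 := by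
  simp only [geomSumXC, finsetSum_coeff, ← C_pow, mul_comm (X ^ _), coeff_C_mul_X_pow]
  rw [sum_ite_eq (range (a + 1)) k]
  simp

theorem natDegree_geomSumXC_le (a : ℕ) : (geomSumXC r a).natDegree ≤ a :=
  natDegree_le_iff_coeff_eq_zero.mpr fun k hk => by
    rw [coeff_geomSumXC, if_neg (by omega)]

@[simp]
theorem coeff_geomSumXC_self (a : ℕ) : (geomSumXC r a).coeff a = 1 := by
  simp [coeff_geomSumXC]

theorem natDegree_geomSumXC [Nontrivial R] (a : ℕ) : (geomSumXC r a).natDegree = a :=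
  (natDegree_geomSumXC_le r a).antisymm
    (le_natDegree_of_ne_zero (by simp))

theorem geomSumXC_mul_X_sub_C (a : ℕ) :
    geomSumXC r a * (X - C r) = X ^ (a + 1) - C r ^ (a + 1) :=
  geom_sum₂_mul X (C r) (a + 1)

theorem geomSumXC_add_succ (a b : ℕ) :
    geomSumXC r (a + b + 1) = C r ^ (b + 1) * geomSumXC r a + geomSumXC r b * X ^ (a + 1) := by
  rw [geomSumXC, show a + b + 1 + 1 = (a + 1) + (b + 1) by omega, sum_range_add, geomSumXC,
    geomSumXC, mul_sum, sum_mul]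
  congr 1
  · refine sum_congr rfl fun i hi => ?_
    rw [show a + b + 1 - i = (a - i) + (b + 1) by grind, pow_add]
    ring
  · refine sum_congr rfl fun i _ => ?_
    rw [show a + b + 1 - (a + 1 + i) = b - i by omega, pow_add]
    ring

theorem resultant_geomSumXC_add_succ (a b : ℕ) :
    resultant (geomSumXC r (a + b + 1)) (geomSumXC r b) (a + b + 1) b =
      r ^ ((b + 1) * b) * resultant (geomSumXC r a) (geomSumXC r b) a b := by
  have hX : (X ^ (a + 1) : R[X]).natDegree + b ≤ a + b + 1 := by
    grw [natDegree_X_pow_le]; omega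
  rw [geomSumXC_add_succ, resultant_add_mul_left _ _ _ _ _ hX (natDegree_geomSumXC_le r b),
    ← C_pow, resultant_C_mul_left, add_assoc,
    resultant_add_left_deg _ _ _ _ _ (natDegree_geomSumXC_le r a), coeff_geomSumXC_self, one_pow,
    mul_one, (Nat.even_mul_succ_self b).neg_one_pow, one_mul, ← pow_mul]

theorem resultant_geomSumXC {a b : ℕ} (h : Nat.Coprime (a + 1) (b + 1)) :
    resultant (geomSumXC r a) (geomSumXC r b) a b = r ^ (a * b) := by
  induction hn : a + b using Nat.strong_induction_on generalizing a b with
  | _ n ih =>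
    wlog hba : b ≤ a generalizing a b
    · rw [resultant_comm, h.even_mul_of_add_one.neg_one_pow, one_mul, mul_comm a b]
      exact this h.symm (by omega) (by omega)
    obtain rfl | hb := Nat.eq_zero_or_pos b
    · simp
    have hab : a ≠ b := by
      rintro rfl
      simp only [Nat.coprime_self, Nat.add_eq_right] at h
      omega
    obtain ⟨c, rfl⟩ : ∃ c, a = c + b + 1 := ⟨a - b - 1, by omega⟩
    have hc : Nat.Coprime (c + 1) (b + 1) :=
      Nat.coprime_add_self_left.mp (by rwa [add_right_comm c, add_assoc])
    rw [resultant_geomSumXC_add_succ, ih (c + b) (by omega) hc rfl]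
    ring

end Polynomial

theorem resultant_eq_polynomial_resultant {R : Type*} [CommRing R] (f g : R[X]) :
    _root_.resultant f g = Polynomial.resultant g f := by
  have hupper (p : R[X]) (k l : ℕ) : (if k ≤ l then p.coeff (l - k) else 0) =
      if k ≤ l ∧ l ≤ k + p.natDegree then p.coeff (l - k) else 0 := by
    by_cases h : l ≤ k + p.natDegree
    · simp [h]
    · simp [h, coeff_eq_zero_of_natDegree_lt (show p.natDegree < l - k by omega)]
  rw [_root_.resultant, Polynomial.resultant, ← Matrix.det_transpose]
  congr 1
  ext i j
  induction j using Fin.addCases with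
  | left j =>
    simp only [sylvester, Matrix.transpose_apply, Matrix.of_apply, Fin.addCases_left, Set.mem_Icc,
      Fin.val_castAdd, if_pos j.isLt]
    exact hupper f j i
  | right j =>
    simp only [sylvester, Matrix.transpose_apply, Matrix.of_apply, Fin.addCases_right, Set.mem_Icc,
      Fin.val_natAdd, if_neg (Nat.not_lt.mpr (Nat.le_add_right _ _)), Nat.add_sub_cancel_left]
    exact hupper g j i

theorem divDiff_X_pow_succ {K : Type*} [Field K] (a : ℕ) :
    divDiff ((X : K[X]) ^ (a + 1)) = geomSumXC X a := by
  rw [divDiff, Polynomial.map_pow, map_X, C_pow, ← geomSumXC_mul_X_sub_C, mul_comm,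
    mul_divByMonic_cancel_left _ (monic_X_sub_C _)]

theorem charPoly_monomials_general {K : Type*} [Field K]
    (m n : ℕ) (hm : 0 < m) (hn : 0 < n) (h : Nat.Coprime m n) :
    charPoly ((Polynomial.X : Polynomial K) ^ m) ((Polynomial.X : Polynomial K) ^ n) =
      Polynomial.X ^ ((m - 1) * (n - 1)) := by
  obtain ⟨a, rfl⟩ : ∃ a, m = a + 1 := ⟨m - 1, by omega⟩
  obtain ⟨b, rfl⟩ : ∃ b, n = b + 1 := ⟨n - 1, by omega⟩
  rw [charPoly, divDiff_X_pow_succ, divDiff_X_pow_succ, resultant_eq_polynomial_resultant,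
    natDegree_geomSumXC, natDegree_geomSumXC, resultant_geomSumXC _ h.symm, Nat.add_sub_cancel,
    Nat.add_sub_cancel, mul_comm]

theorem charPoly_monomials {K : Type*} [Field K] [IsAlgClosed K] [CharZero K]
    (m n : ℕ) (hm : 0 < m) (hn : 0 < n) (h : Nat.Coprime m n) :
    charPoly ((Polynomial.X : Polynomial K) ^ m) ((Polynomial.X : Polynomial K) ^ n) =
      Polynomial.X ^ ((m - 1) * (n - 1)) :=
  charPoly_monomials_general m n hm hn h
end

section
/- Let p, q ∈ K[x] be monic polynomials whose degrees are relatively prime, let A be the K-subalgebra of K[x] generated by p and q, and let α ∈ K. Then the following are equivalent: (i) α ∈ Sp(A); (ii) either p'(α) = 0 and q'(α) = 0, or there exists β ∈ K with β ≠ α such that p(α) = p(β) and q(α) = q(β); (iii) χ_{p,q}(α) = 0. -/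
open Polynomial

/-!
Specialising `x = α` commutes with the Sylvester determinant, because the `y`-degrees of `P` and
`Q` are `deg p - 1` and `deg q - 1` both before and after specialisation; so `χ_{p,q}(α)` is the
resultant of `P(α, y)` and `Q(α, y)`. Over an algebraically closed field it vanishes iff these have
a common root `β`, and `P(α, β) = 0` means `p(β) = p(α)` if `β ≠ α` and `p'(α) = 0` if `β = α`.
For (i) ⟺ (ii): both "`f'(α) = 0`" and "`f(α) = f(β)`" define subalgebras of `K[x]`.
-/

theorem resultant_eq_resultant_swap {R : Type*} [CommRing R] (f g : R[X]) :
    _root_.resultant f g = g.resultant f := by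
  rw [_root_.resultant, Polynomial.resultant, ← Matrix.det_transpose (sylvester g f _ _)]
  congr 1
  ext i j
  induction i using Fin.addCases <;>
  · simp only [sylvester, Matrix.transpose_apply, Matrix.of_apply, Fin.addCases_left,
      Fin.addCases_right, Fin.val_castAdd, Fin.val_natAdd, Set.mem_Icc]
    split_ifs <;> simp_all
    exact coeff_eq_zero_of_natDegree_lt (by omega)

theorem Polynomial.resultant_eq_zero_iff_exists_common_root {K : Type*} [Field K] [IsAlgClosed K]
    {f g : K[X]} (h : f ≠ 0 ∨ g ≠ 0) :
    f.resultant g = 0 ↔ ∃ a, f.eval a = 0 ∧ g.eval a = 0 := by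
  rw [resultant_eq_zero_iff, isCoprime_iff_aeval_ne_zero_of_isAlgClosed (k := K) K]
  simp [h]

section DivDiff

variable {K : Type*} [Field K]

theorem X_sub_C_mul_divDiff (p : K[X]) :
    (X - C X) * divDiff p = p.map C - C p :=
  mul_divByMonic_eq_iff_isRoot.2 (by simp [eval_map])

theorem natDegree_divDiff (p : K[X]) : (divDiff p).natDegree = p.natDegree - 1 := by
  rw [divDiff, natDegree_divByMonic _ (monic_X_sub_C _), natDegree_sub_C,
    natDegree_map_eq_of_injective C_injective, natDegree_X_sub_C]

/-- `P(α, y) = (p(y) − p(α))/(y − α)`, the specialisation of `divDiff p` at `x = α`. -/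
noncomputable def divDiffAt (p : K[X]) (α : K) : K[X] := (p - C (p.eval α)) /ₘ (X - C α)

theorem X_sub_C_mul_divDiffAt (p : K[X]) (α : K) :
    (X - C α) * divDiffAt p α = p - C (p.eval α) :=
  mul_divByMonic_eq_iff_isRoot.2 (by simp)

theorem map_evalRingHom_divDiff (p : K[X]) (α : K) :
    (divDiff p).map (evalRingHom α) = divDiffAt p α := by
  have h := congrArg (map (evalRingHom α)) (X_sub_C_mul_divDiff p)
  have hid : (evalRingHom α).comp C = RingHom.id K := by ext; simp
  simp only [Polynomial.map_mul, Polynomial.map_sub, map_X, map_C, Polynomial.map_map, hid,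
    Polynomial.map_id, coe_evalRingHom, eval_X] at h
  rw [divDiffAt, ← h, mul_divByMonic_cancel_left _ (monic_X_sub_C α)]

theorem natDegree_divDiffAt (p : K[X]) (α : K) : (divDiffAt p α).natDegree = p.natDegree - 1 := by
  rw [divDiffAt, natDegree_divByMonic _ (monic_X_sub_C _), natDegree_sub_C, natDegree_X_sub_C]

theorem divDiffAt_ne_zero {p : K[X]} (hp : p.natDegree ≠ 0) (α : K) : divDiffAt p α ≠ 0 := by
  intro h
  have := X_sub_C_mul_divDiffAt p α
  rw [h, mul_zero, eq_comm, sub_eq_zero] at this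
  exact hp (by rw [this, natDegree_C])

theorem eval_divDiffAt_self (p : K[X]) (α : K) :
    (divDiffAt p α).eval α = (derivative p).eval α := by
  have h := divByMonic_add_X_sub_C_mul_derivative_divByMonic_eq_derivative (p - C (p.eval α)) α
  rw [derivative_sub, derivative_C, sub_zero] at h
  simpa [divDiffAt] using congrArg (eval α) h

theorem eval_divDiffAt_eq_zero_iff_of_ne {p : K[X]} {α β : K} (hβ : β ≠ α) :
    (divDiffAt p α).eval β = 0 ↔ p.eval α = p.eval β := by
  have h := congrArg (eval β) (X_sub_C_mul_divDiffAt p α)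
  rw [eval_mul, eval_sub, eval_sub, eval_X, eval_C, eval_C] at h
  rw [← mul_eq_zero_iff_left (sub_ne_zero.2 hβ), h, sub_eq_zero, eq_comm]

theorem eval_charPoly (p q : K[X]) (α : K) :
    (charPoly p q).eval α = (divDiffAt q α).resultant (divDiffAt p α) := by
  rw [charPoly, resultant_eq_resultant_swap, ← coe_evalRingHom, ← resultant_map_map,
    map_evalRingHom_divDiff, map_evalRingHom_divDiff, natDegree_divDiff, natDegree_divDiff,
    natDegree_divDiffAt, natDegree_divDiffAt]

theorem eval_charPoly_eq_zero_iff [IsAlgClosed K] {p q : K[X]}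
    (h : p.natDegree ≠ 0 ∨ q.natDegree ≠ 0) (α : K) :
    (charPoly p q).eval α = 0 ↔
      ((derivative p).eval α = 0 ∧ (derivative q).eval α = 0) ∨
        ∃ β, β ≠ α ∧ p.eval α = p.eval β ∧ q.eval α = q.eval β := by
  rw [eval_charPoly, resultant_eq_zero_iff_exists_common_root
    (h.symm.imp (divDiffAt_ne_zero · α) (divDiffAt_ne_zero · α))]
  constructor
  · rintro ⟨β, hq, hp⟩
    rcases eq_or_ne β α with rfl | hβ
    · rw [eval_divDiffAt_self] at hp hq
      exact .inl ⟨hp, hq⟩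
    · rw [eval_divDiffAt_eq_zero_iff_of_ne hβ] at hp hq
      exact .inr ⟨β, hβ, hp, hq⟩
  · rintro (⟨hp, hq⟩ | ⟨β, hβ, hp, hq⟩)
    · exact ⟨α, by rwa [eval_divDiffAt_self], by rwa [eval_divDiffAt_self]⟩
    · exact ⟨β, (eval_divDiffAt_eq_zero_iff_of_ne hβ).2 hq,
        (eval_divDiffAt_eq_zero_iff_of_ne hβ).2 hp⟩

end DivDiff

section Spectrum

variable {K : Type*} [Field K]

theorem eval_derivative_eq_zero_of_mem_adjoin {s : Set K[X]} {α : K}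
    (hs : ∀ f ∈ s, (derivative f).eval α = 0) {f : K[X]} (hf : f ∈ Algebra.adjoin K s) :
    (derivative f).eval α = 0 := by
  induction hf using Algebra.adjoin_induction with
  | mem f hf => exact hs f hf
  | algebraMap c => simp
  | add f g _ _ hf hg => simp [hf, hg]
  | mul f g _ _ hf hg => simp [hf, hg]

theorem eval_eq_eval_of_mem_adjoin {s : Set K[X]} {α β : K}
    (hs : ∀ f ∈ s, f.eval α = f.eval β) {f : K[X]} (hf : f ∈ Algebra.adjoin K s) :
    f.eval α = f.eval β :=
  Algebra.adjoin_le (S := AlgHom.equalizer (aeval α) (aeval β))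
    (fun f hf => by simpa using hs f hf) hf

theorem mem_subalgebraSpectrum_adjoin_iff (s : Set K[X]) (α : K) :
    α ∈ subalgebraSpectrum (Algebra.adjoin K s) ↔
      (∀ f ∈ s, (derivative f).eval α = 0) ∨ ∃ β, β ≠ α ∧ ∀ f ∈ s, f.eval α = f.eval β := by
  have hs : s ⊆ Algebra.adjoin K s := Algebra.subset_adjoin
  constructor
  · rintro (h | ⟨β, hβ, h⟩)
    · exact .inl fun f hf => h f (hs hf)
    · exact .inr ⟨β, hβ, fun f hf => h f (hs hf)⟩
  · rintro (h | ⟨β, hβ, h⟩)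
    · exact .inl fun f => eval_derivative_eq_zero_of_mem_adjoin h
    · exact .inr ⟨β, hβ, fun f => eval_eq_eval_of_mem_adjoin h⟩

end Spectrum

theorem mem_spectrum_iff_root_of_charPoly_general
    {K : Type*} [Field K] [IsAlgClosed K]
    (p q : Polynomial K)
    (hcop : Nat.Coprime p.natDegree q.natDegree)
    (A : Subalgebra K (Polynomial K)) (hA : A = Algebra.adjoin K {p, q})
    (α : K) :
    (α ∈ subalgebraSpectrum A ↔
      ((Polynomial.derivative p).eval α = 0 ∧ (Polynomial.derivative q).eval α = 0) ∨
        ∃ β : K, β ≠ α ∧ p.eval α = p.eval β ∧ q.eval α = q.eval β) ∧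
    (α ∈ subalgebraSpectrum A ↔ (charPoly p q).eval α = 0) := by
  have hspec : α ∈ subalgebraSpectrum A ↔
      ((derivative p).eval α = 0 ∧ (derivative q).eval α = 0) ∨
        ∃ β : K, β ≠ α ∧ p.eval α = p.eval β ∧ q.eval α = q.eval β := by
    simp only [hA, mem_subalgebraSpectrum_adjoin_iff, Set.forall_mem_insert,
      Set.mem_singleton_iff, forall_eq]
  have hdeg : p.natDegree ≠ 0 ∨ q.natDegree ≠ 0 := by
    by_contra! h
    rw [h.1, h.2] at hcop
    exact absurd hcop (by decide)
  exact ⟨hspec, hspec.trans (eval_charPoly_eq_zero_iff hdeg α).symm⟩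

theorem mem_spectrum_iff_root_of_charPoly
    {K : Type*} [Field K] [IsAlgClosed K] [CharZero K]
    (p q : Polynomial K) (hp : p.Monic) (hq : q.Monic)
    (hcop : Nat.Coprime p.natDegree q.natDegree)
    (A : Subalgebra K (Polynomial K)) (hA : A = Algebra.adjoin K {p, q})
    (α : K) :
    (α ∈ subalgebraSpectrum A ↔
      ((Polynomial.derivative p).eval α = 0 ∧ (Polynomial.derivative q).eval α = 0) ∨
        ∃ β : K, β ≠ α ∧ p.eval α = p.eval β ∧ q.eval α = q.eval β) ∧
    (α ∈ subalgebraSpectrum A ↔ (charPoly p q).eval α = 0) :=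
  mem_spectrum_iff_root_of_charPoly_general p q hcop A hA α
end

section
/- Let α_1, ..., α_m ∈ K be pairwise distinct with m ≥ 2, and let A = {f ∈ K[x] : f(α_1) = f(α_2) = ⋯ = f(α_m)}. Then A is a K-subalgebra of K[x] whose codimension equals m − 1, and A is generated as a K-algebra by the m polynomials p_i = (x − α_1)^i (x − α_2)⋯(x − α_m) for i = 1, ..., m. -/
/-!
A polynomial takes the same value `c` at all the `α i` iff it is `c` plus a multiple of
`P = ∏ i, (X - C (α i))`. Evaluation at the `α i` is onto `K^m` by Lagrange interpolation and
identifies `K[X] ⧸ A` with `K^m` modulo the constants, which has dimension `m - 1`.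
Let `B` be the algebra generated by the `p_i = P * (X - C (α 1))^(i-1)`, which contains `P`.
The `g` with `P * g ∈ B` form a subspace containing a basis of the polynomials of degree `< m` and
stable under multiplication by `P`, so division with remainder by `P` shows `P * K[X] ⊆ B`.
-/

open Polynomial

namespace Polynomial

variable {R ι : Type*} [CommRing R]

theorem mem_of_natDegree_le_of_forall_X_sub_C_pow_mem {M : Submodule R R[X]} {a : R} {n : ℕ}
    (hM : ∀ k ≤ n, (X - C a) ^ k ∈ M) {f : R[X]} (hf : f.natDegree ≤ n) : f ∈ M := by
  rw [← sum_taylor_eq f a, Polynomial.sum_def]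
  refine Submodule.sum_mem _ fun k hk => ?_
  rw [C_mul']
  refine M.smul_mem _ (hM k (le_trans ?_ hf))
  rw [← natDegree_taylor f a]
  exact le_natDegree_of_mem_supp k hk

theorem submodule_eq_top_of_mul_mem {M : Submodule R R[X]} {p : R[X]} (hp : p.Monic)
    (hp0 : 0 < p.natDegree) (hlow : ∀ f : R[X], f.natDegree < p.natDegree → f ∈ M)
    (hmul : ∀ f ∈ M, p * f ∈ M) : M = ⊤ := by
  have hp1 : p ≠ 1 := fun h => by simp [h] at hp0
  refine eq_top_iff.mpr fun f _ => ?_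
  induction hdeg : f.natDegree using Nat.strong_induction_on generalizing f with
  | _ d ih =>
    rcases lt_or_ge d p.natDegree with hd | hd
    · exact hlow f (hdeg ▸ hd)
    · rw [← modByMonic_add_div f p]
      refine add_mem (hlow _ (natDegree_modByMonic_lt f hp hp1)) (hmul _ ?_)
      exact ih (d - p.natDegree) (by omega) _ trivial (by rw [natDegree_divByMonic f hp, hdeg])

theorem X_sub_C_mul_mul_mem_adjoin (a : R) {q : R[X]} (hq : q.Monic) {n : ℕ}
    (hn : q.natDegree < n) (h : R[X]) :
    (X - C a) * q * h ∈
      Algebra.adjoin R (Set.range fun k : Fin n => (X - C a) ^ ((k : ℕ) + 1) * q) := by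
  nontriviality R
  set B := Algebra.adjoin R (Set.range fun k : Fin n => (X - C a) ^ ((k : ℕ) + 1) * q)
  set p := (X - C a) * q
  have hp : p.Monic := (monic_X_sub_C a).mul hq
  have hpdeg : p.natDegree = q.natDegree + 1 := by
    rw [(monic_X_sub_C a).natDegree_mul hq, natDegree_X_sub_C, add_comm]
  have hgen : ∀ k ≤ q.natDegree, p * (X - C a) ^ k ∈ B := fun k hk => by
    refine Algebra.subset_adjoin ⟨⟨k, by omega⟩, ?_⟩
    simp only [p]
    ring
  have hpB : p ∈ B := by simpa using hgen 0 (Nat.zero_le _)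
  let M := (Subalgebra.toSubmodule B).comap (LinearMap.mulLeft R p)
  have hM : M = ⊤ := by
    refine submodule_eq_top_of_mul_mem hp (by omega) (fun f hf => ?_) (fun f hf => ?_)
    · exact mem_of_natDegree_le_of_forall_X_sub_C_pow_mem (M := M) hgen (by omega)
    · exact (mul_mem hpB hf : p * (p * f) ∈ B)
  exact (hM ▸ Submodule.mem_top : h ∈ M)

def sameValueSubalgebra (α : ι → R) : Subalgebra R R[X] where
  carrier := {f | ∀ i j, f.eval (α i) = f.eval (α j)}
  mul_mem' hf hg i j := by simp only [eval_mul, hf i j, hg i j]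
  add_mem' hf hg i j := by simp only [eval_add, hf i j, hg i j]
  algebraMap_mem' c i j := by simp

@[simp]
theorem mem_sameValueSubalgebra {α : ι → R} {f : R[X]} :
    f ∈ sameValueSubalgebra α ↔ ∀ i j, f.eval (α i) = f.eval (α j) :=
  Iff.rfl

section Field

variable {K : Type*} [Field K] [Fintype ι] {α : ι → K}

theorem finrank_quotient_sameValueSubalgebra [Nonempty ι] (hα : Function.Injective α) :
    Module.finrank K (K[X] ⧸ Subalgebra.toSubmodule (sameValueSubalgebra α)) =
      Fintype.card ι - 1 := by
  classical
  let ev : K[X] →ₗ[K] (ι → K) := LinearMap.pi fun i => leval (α i)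
  have hev : Function.Surjective ev := fun v =>
    ⟨Lagrange.interpolate Finset.univ α v, _root_.funext fun i =>
      (Lagrange.eval_interpolate_at_node v hα.injOn (Finset.mem_univ i) :)⟩
  have hker : Subalgebra.toSubmodule (sameValueSubalgebra α) =
      LinearMap.ker ((K ∙ (1 : ι → K)).mkQ ∘ₗ ev) := by
    rw [LinearMap.ker_comp, Submodule.ker_mkQ]
    ext f
    simp only [Subalgebra.mem_toSubmodule, mem_sameValueSubalgebra, Submodule.mem_comap,
      Submodule.mem_span_singleton, _root_.funext_iff]
    refine ⟨fun hf => ⟨f.eval (α (Classical.arbitrary ι)), fun i => ?_⟩,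
      fun ⟨c, hc⟩ i j => ?_⟩
    · simpa [ev] using hf _ i
    · simpa [ev] using (hc i).symm.trans (hc j)
  have hsurj : Function.Surjective ((K ∙ (1 : ι → K)).mkQ ∘ₗ ev) :=
    (Submodule.mkQ_surjective _).comp hev
  rw [hker, (LinearMap.quotKerEquivOfSurjective _ hsurj).finrank_eq,
    Submodule.finrank_quotient, finrank_span_singleton one_ne_zero,
    Module.finrank_fintype_fun_eq_card]

theorem prod_X_sub_C_dvd_sub_C_of_mem_sameValueSubalgebra (hα : Function.Injective α)
    {f : K[X]} (hf : f ∈ sameValueSubalgebra α) (i₀ : ι) :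
    ∏ j, (X - C (α j)) ∣ f - C (f.eval (α i₀)) :=
  Finset.prod_dvd_of_coprime ((pairwise_coprime_X_sub_C hα).set_pairwise _) fun j _ => by
    rw [dvd_iff_isRoot, IsRoot, eval_sub, eval_C, hf j i₀, sub_self]

theorem sameValueSubalgebra_eq_adjoin [DecidableEq ι] (hα : Function.Injective α) (i₀ : ι)
    {n : ℕ} (hn : Fintype.card ι ≤ n) :
    sameValueSubalgebra α = Algebra.adjoin K (Set.range fun k : Fin n =>
      (X - C (α i₀)) ^ ((k : ℕ) + 1) * ∏ j ∈ Finset.univ.erase i₀, (X - C (α j))) := by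
  have hprod : ∏ j, (X - C (α j)) = (X - C (α i₀)) * ∏ j ∈ Finset.univ.erase i₀, (X - C (α j)) :=
    (Finset.mul_prod_erase _ _ (Finset.mem_univ i₀)).symm
  refine le_antisymm (fun f hf => ?_) (Algebra.adjoin_le ?_)
  · obtain ⟨h, hh⟩ := prod_X_sub_C_dvd_sub_C_of_mem_sameValueSubalgebra hα hf i₀
    rw [← sub_add_cancel f (C (f.eval (α i₀))), hh, hprod]
    refine add_mem (X_sub_C_mul_mul_mem_adjoin _ (monic_prod_of_monic _ _ fun j _ =>
      monic_X_sub_C _) ?_ h) (Subalgebra.algebraMap_mem _ _)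
    rw [natDegree_prod_of_monic _ _ fun j _ => monic_X_sub_C _]
    simp only [natDegree_X_sub_C, Finset.sum_const, smul_eq_mul, mul_one,
      Finset.card_erase_of_mem (Finset.mem_univ i₀), Finset.card_univ]
    have := Fintype.card_pos_iff.mpr ⟨i₀⟩
    omega
  · rintro _ ⟨k, rfl⟩ i j
    have hvanish : ∀ i, ((X - C (α i₀)) ^ ((k : ℕ) + 1) *
        ∏ j ∈ Finset.univ.erase i₀, (X - C (α j))).eval (α i) = 0 := fun i => by
      rw [pow_succ, mul_assoc, ← hprod, eval_mul, eval_prod,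
        Finset.prod_eq_zero (Finset.mem_univ i) (by simp), mul_zero]
    rw [hvanish i, hvanish j]

end Field

end Polynomial

theorem one_cluster_subalgebra_codim_and_generators
    {K : Type*} [Field K]
    (m : ℕ) (hm : 2 ≤ m) (α : Fin m → K) (hinj : Function.Injective α) :
    ∃ A : Subalgebra K (Polynomial K),
      (∀ f : Polynomial K, f ∈ A ↔ ∀ i j : Fin m, f.eval (α i) = f.eval (α j)) ∧
      Module.finrank K (Polynomial K ⧸ Subalgebra.toSubmodule A) = m - 1 ∧
      A = Algebra.adjoin K (Set.range fun i : Fin m =>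
        (Polynomial.X - Polynomial.C (α ⟨0, by omega⟩)) ^ ((i : ℕ) + 1) *
          ∏ j ∈ Finset.univ.erase (⟨0, by omega⟩ : Fin m),
            (Polynomial.X - Polynomial.C (α j))) := by
  have : NeZero m := ⟨by omega⟩
  refine ⟨sameValueSubalgebra α, fun f => mem_sameValueSubalgebra, ?_, ?_⟩
  · rw [finrank_quotient_sameValueSubalgebra hinj, Fintype.card_fin]
  · exact sameValueSubalgebra_eq_adjoin hinj _ (Fintype.card_fin m).le
end
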